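/- arXiv:2208.02410 — 6 statements merged into one kernel-verified Lean document; each statement's English description precedes it below -/
import Mathlib

section
/- Let n ≥ 0 and a_0, …, a_n ∈ ℂ, and let f(ω) = Σ_{k=0}^n a_k ω^k be a polynomial. Then for every integer m ≥ 1, the m-th Taylor coefficient at 0 of the analytic function z ↦ f(φ(z)) on the open unit disk equals Σ_{k=1}^{min(m,n)} a_k 4^k C(m+k−1, m−k), where C(·,·) denotes the binomial coefficient. -/
open Finset FormalMultilinearSeries ENNReal NNReal

/-- The one-cut conformal map `φ(z) = 4z/(1-z)²`. -/
noncomputable def oneCutMap (z : ℂ) : ℂ := 4 * z / (1 - z) ^ 2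

section aux

variable {𝕜 : Type*} [NormedField 𝕜] [HasSummableGeomSeries 𝕜]

/-- coefficient of the `k`-th power term. -/
noncomputable def ocCoef (a : ℕ → 𝕜) (k m : ℕ) : 𝕜 :=
  if k = 0 then (if m = 0 then a 0 else 0)
  else if k ≤ m then a k * 4 ^ k * ((m + k - 1).choose (m - k) : 𝕜)
  else 0

/-- full Taylor coefficient. -/
noncomputable def ocC (a : ℕ → 𝕜) (n m : ℕ) : 𝕜 :=
  ∑ k ∈ Finset.range (n + 1), ocCoef a k m

lemma ocKey (k : ℕ) (hk : 1 ≤ k) {y : 𝕜} (hy : ‖y‖ < 1) (b : 𝕜) :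
    HasSum (fun m : ℕ =>
      (if k ≤ m then b * 4 ^ k * ((m + k - 1).choose (m - k) : 𝕜) else 0) * y ^ m)
      (b * 4 ^ k * (y ^ k / (1 - y) ^ (2 * k))) := by
  have h := (hasSum_choose_mul_geometric_of_norm_lt_one (2 * k - 1) hy).mul_left
      (b * 4 ^ k * y ^ k)
  have h2k : 2 * k - 1 + 1 = 2 * k := by omega
  rw [h2k] at h
  have := (Function.Injective.hasSum_iff (g := fun j => j + k)
      (f := fun m : ℕ =>
        (if k ≤ m then b * 4 ^ k * ((m + k - 1).choose (m - k) : 𝕜) else 0) * y ^ m)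
      (a := b * 4 ^ k * y ^ k * (1 / (1 - y) ^ (2 * k)))
      (fun x y hxy => by simpa using hxy) ?_).mp ?_
  · convert this using 1
    rw [mul_one_div]
    ring
  · intro m hm
    have hmk : ¬ k ≤ m := by
      intro h'
      exact hm ⟨m - k, by simp; omega⟩
    simp [hmk]
  · refine h.congr_fun fun j => ?_
    simp only [Function.comp_apply]
    have h1 : k ≤ j + k := by omega
    have h2 : j + k - k = j := by omega
    have h3 : j + k + k - 1 = j + (2 * k - 1) := by omega
    have h4 : (j + (2 * k - 1)).choose j = (j + (2 * k - 1)).choose (2 * k - 1) := by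
      rw [← Nat.choose_symm (Nat.le_add_right j (2 * k - 1))]
      congr 1
      omega
    rw [if_pos h1, h2, h3, h4]
    ring

lemma ocCoef_hasSum (a : ℕ → 𝕜) (k : ℕ) {y : 𝕜} (hy : ‖y‖ < 1) :
    HasSum (fun m : ℕ => ocCoef a k m * y ^ m)
      (a k * (4 * y / (1 - y) ^ 2) ^ k) := by
  have h1y : (1 : 𝕜) - y ≠ 0 := by
    intro h
    have : y = 1 := by linear_combination -h
    rw [this] at hy; simp at hy
  rcases Nat.eq_zero_or_pos k with hk | hk
  · subst hk
    simp only [ocCoef, if_pos rfl, pow_zero, mul_one]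
    have := hasSum_ite_eq (0 : ℕ) (a 0)
    refine this.congr_fun fun m => ?_
    by_cases hm : m = 0 <;> simp [hm, eq_comm]
  · have := ocKey k hk hy (a k)
    have hval : a k * 4 ^ k * (y ^ k / (1 - y) ^ (2 * k))
        = a k * (4 * y / (1 - y) ^ 2) ^ k := by
      rw [div_pow, mul_pow, pow_mul]
      field_simp
    rw [hval] at this
    refine this.congr_fun fun m => ?_
    simp only [ocCoef]
    have : k ≠ 0 := by omega
    rw [if_neg this]

lemma ocC_hasSum (a : ℕ → 𝕜) (n : ℕ) {y : 𝕜} (hy : ‖y‖ < 1) :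
    HasSum (fun m : ℕ => ocC a n m * y ^ m)
      (∑ k ∈ Finset.range (n + 1), a k * (4 * y / (1 - y) ^ 2) ^ k) := by
  have h := hasSum_sum (s := Finset.range (n + 1))
      (f := fun k (m : ℕ) => ocCoef a k m * y ^ m)
      (a := fun k => a k * (4 * y / (1 - y) ^ 2) ^ k)
      (fun k _ => ocCoef_hasSum a k hy)
  refine h.congr_fun fun m => ?_
  rw [ocC, Finset.sum_mul]

end aux

lemma ocC_norm_le (a : ℕ → ℂ) (n m : ℕ) :
    ‖ocC a n m‖ ≤ ocC (fun k => ‖a k‖) n m := by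
  refine (norm_sum_le _ _).trans_eq (Finset.sum_congr rfl fun k _ => ?_)
  unfold ocCoef
  rcases eq_or_ne k 0 with hk | hk
  · subst hk; by_cases hm : m = 0 <;> simp [hm]
  · rw [if_neg hk, if_neg hk]
    by_cases hkm : k ≤ m
    · rw [if_pos hkm, if_pos hkm]
      simp [norm_mul, norm_pow]
    · simp [hkm]

lemma ocC_hasFPowerSeries (a : ℕ → ℂ) (n : ℕ) :
    HasFPowerSeriesOnBall
      (fun z : ℂ => ∑ k ∈ Finset.range (n + 1), a k * (oneCutMap z) ^ k)
      (FormalMultilinearSeries.ofScalars ℂ (ocC a n)) 0 (1/2) := by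
  constructor
  · have key : ((1/2 : ℝ≥0) : ℝ≥0∞) ≤ (FormalMultilinearSeries.ofScalars ℂ (ocC a n)).radius := by
      apply FormalMultilinearSeries.le_radius_of_summable
      have hhalf : ‖(1/2 : ℝ)‖ < 1 := by norm_num
      have hs := (ocC_hasSum (fun k => ‖a k‖) n hhalf).summable
      refine Summable.of_nonneg_of_le (fun m => ?_) (fun m => ?_) hs
      · positivity
      · rw [FormalMultilinearSeries.ofScalars_norm]
        calc ‖ocC a n m‖ * ((1/2 : ℝ≥0) : ℝ) ^ m
            ≤ ocC (fun k => ‖a k‖) n m * ((1/2 : ℝ≥0) : ℝ) ^ m := by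
              apply mul_le_mul_of_nonneg_right (ocC_norm_le a n m) (by positivity)
          _ = ocC (fun k => ‖a k‖) n m * (1/2 : ℝ) ^ m := by norm_num
    refine le_trans (le_of_eq ?_) key
    simp
  · norm_num
  · intro y hy
    rw [EMetric.mem_ball, edist_zero_right] at hy
    have hy1 : ‖y‖ < 1 := by
      have h2 : (‖y‖₊ : ℝ≥0∞) < ((1/2 : ℝ≥0) : ℝ≥0∞) := by
        refine hy.trans_le (le_of_eq ?_)
        simp
      rw [ENNReal.coe_lt_coe] at h2
      calc ‖y‖ = (‖y‖₊ : ℝ) := rfl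
        _ < ((1/2 : ℝ≥0) : ℝ) := by exact_mod_cast h2
        _ < 1 := by norm_num
    have hfun : (fun m => (FormalMultilinearSeries.ofScalars ℂ (ocC a n)) m fun _ => y)
        = fun m => ocC a n m * y ^ m := by
      funext m
      rw [FormalMultilinearSeries.ofScalars_apply_eq]
      simp [smul_eq_mul]
    rw [hfun, zero_add]
    simpa [oneCutMap] using ocC_hasSum a n hy1

/-- For a polynomial `f(ω) = Σ_{k=0}^n a_k ω^k` and any `m ≥ 1`, the `m`-th Taylor
coefficient at `0` of `z ↦ f(φ(z))` equals `Σ_{k=1}^{min(m,n)} a_k 4^k C(m+k-1, m-k)`. -/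
theorem taylorCoeff_poly_comp_oneCutMap (n : ℕ) (a : ℕ → ℂ) (m : ℕ) (hm : 1 ≤ m) :
    iteratedDeriv m (fun z : ℂ => ∑ k ∈ Finset.range (n + 1), a k * (oneCutMap z) ^ k) 0
        / (m.factorial : ℂ)
      = ∑ k ∈ Finset.Icc 1 (min m n), a k * 4 ^ k * ((m + k - 1).choose (m - k) : ℂ) := by
  have hb := ocC_hasFPowerSeries a n
  have hfs := hb.factorial_smul (1 : ℂ) m
  have hid : iteratedDeriv m
      (fun z : ℂ => ∑ k ∈ Finset.range (n + 1), a k * (oneCutMap z) ^ k) 0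
      = (m.factorial : ℂ) * ocC a n m := by
    rw [iteratedDeriv_eq_iteratedFDeriv, ← hfs,
      FormalMultilinearSeries.ofScalars_apply_eq]
    simp [smul_eq_mul]
  rw [hid, mul_div_cancel_left₀ _ (show (m.factorial:ℂ) ≠ 0 by exact_mod_cast m.factorial_ne_zero), ocC]
  have h1 : ∑ k ∈ Finset.range (n + 1), ocCoef a k m
      = ∑ k ∈ Finset.range (n + 1),
          (if k ∈ Finset.Icc 1 (min m n) then
            a k * 4 ^ k * ((m + k - 1).choose (m - k) : ℂ) else 0) := by
    refine Finset.sum_congr rfl fun k hk => ?_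
    simp only [Finset.mem_range] at hk
    simp only [Finset.mem_Icc, ocCoef]
    rcases eq_or_ne k 0 with h0 | h0
    · subst h0
      rw [if_pos rfl, if_neg (by omega), if_neg (by omega)]
    · rw [if_neg h0]
      by_cases hkm : k ≤ m
      · rw [if_pos hkm, if_pos (by omega)]
      · rw [if_neg hkm, if_neg (by omega)]
  rw [h1, Finset.sum_ite_mem, Finset.inter_eq_right.mpr]
  intro k hk
  simp only [Finset.mem_Icc] at hk
  simp only [Finset.mem_range]
  omega
end

section
/- For each integer m ≥ 1, let k_m ∈ {0, 1, …, m} be any maximizer of the function k ↦ 16^k C(m+k−1, m−k)² on {0, 1, …, m}. Then k_m/m → 1/√2 as m → ∞ (i.e., the summand is peaked around k ≈ m/√2). -/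
open Filter

lemma aux_choose (d s : ℕ) :
    (s+1)*(s+2) * ((d+s+2).choose d) = (d+s+2)*(d+1) * ((d+s+1).choose (d+1)) := by
  have h1 := Nat.add_one_mul_choose_eq (d+s+1) d
  have h2 := Nat.choose_succ_right_eq (d+s+2) d
  have h3 := Nat.choose_succ_right_eq (d+s+1) d
  rw [show d+s+2 - d = s+2 by omega] at h2
  rw [show d+s+1 - d = s+1 by omega] at h3
  have h4 : (d+s+2) * ((d+s+1).choose d) = (d+s+2).choose d * (s+2) := by
    have h1' : (d+s+2) * ((d+s+1).choose d) = (d+s+2).choose (d+1) * (d+1) := by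
      simpa [Nat.succ_eq_add_one] using h1
    rw [h1', h2]
  calc (s+1)*(s+2)*((d+s+2).choose d)
      = (s+1)*((d+s+2).choose d * (s+2)) := by ring
    _ = (s+1)*((d+s+2) * ((d+s+1).choose d)) := by rw [h4]
    _ = (d+s+2) * ((d+s+1).choose d * (s+1)) := by ring
    _ = (d+s+2) * ((d+s+1).choose (d+1) * (d+1)) := by rw [h3]
    _ = (d+s+2)*(d+1)*((d+s+1).choose (d+1)) := by ring

lemma aux_choose' (t u : ℕ) :
    (2*u+2)*(2*u+3) * ((t+2*u+3).choose t) = (t+2*u+3)*(t+1) * ((t+2*u+2).choose (t+1)) := by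
  have h := aux_choose t (2*u+1)
  rw [show t+(2*u+1)+2 = t+2*u+3 by ring, show t+(2*u+1)+1 = t+2*u+2 by ring,
      show 2*u+1+1 = 2*u+2 by ring, show 2*u+1+2 = 2*u+3 by ring] at h
  exact h

lemma lower_nat (m k : ℕ) (hk1 : 1 ≤ k) (hkm : k+1 ≤ m)
    (h : 4 * ((m+k).choose (m-k-1)) ≤ (m+k-1).choose (m-k)) :
    4*m^2 ≤ 8*k^2 + 2*k := by
  obtain ⟨u, rfl⟩ : ∃ u, k = u+1 := ⟨k-1, by omega⟩
  obtain ⟨t, rfl⟩ : ∃ t, m = t+u+2 := ⟨m-u-2, by omega⟩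
  rw [show t+u+2+(u+1)-1 = t+2*u+2 by omega, show t+u+2-(u+1)-1 = t by omega,
      show t+u+2+(u+1) = t+2*u+3 by ring, show t+u+2-(u+1) = t+1 by omega] at h
  have hid := aux_choose' t u
  set A := (t+2*u+3).choose t with hA
  set B := (t+2*u+2).choose (t+1) with hB
  have hBpos : 1 ≤ B := Nat.choose_pos (by omega)
  have key : 4*((t+2*u+3)*(t+1)) ≤ (2*u+2)*(2*u+3) := by
    have h6 : (2*u+2)*(2*u+3)*(4*A) ≤ (2*u+2)*(2*u+3)*B := Nat.mul_le_mul_left _ h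
    have h5 : (2*u+2)*(2*u+3)*(4*A) = 4*((t+2*u+3)*(t+1))*B := by
      calc (2*u+2)*(2*u+3)*(4*A) = 4*((2*u+2)*(2*u+3)*A) := by ring
        _ = 4*((t+2*u+3)*(t+1)*B) := by rw [hid]
        _ = 4*((t+2*u+3)*(t+1))*B := by ring
    rw [h5] at h6
    exact Nat.le_of_mul_le_mul_right h6 (by omega)
  nlinarith [key]

lemma upper_nat (m k : ℕ) (hk2 : 2 ≤ k) (hkm : k ≤ m)
    (h : (m+k-2).choose (m-k+1) ≤ 4 * ((m+k-1).choose (m-k))) :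
    2*(k-1)^2 ≤ m^2 := by
  obtain ⟨u, rfl⟩ : ∃ u, k = u+2 := ⟨k-2, by omega⟩
  obtain ⟨t, rfl⟩ : ∃ t, m = t+u+2 := ⟨m-u-2, by omega⟩
  rw [show t+u+2+(u+2)-2 = t+2*u+2 by omega, show t+u+2-(u+2)+1 = t+1 by omega,
      show t+u+2+(u+2)-1 = t+2*u+3 by omega, show t+u+2-(u+2) = t by omega] at h
  have hid := aux_choose' t u
  set A := (t+2*u+2).choose (t+1) with hA
  set B := (t+2*u+3).choose t with hB
  have hBpos : 1 ≤ B := Nat.choose_pos (by omega)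
  have key : (2*u+2)*(2*u+3) ≤ 4*((t+2*u+3)*(t+1)) := by
    have h6 : (t+2*u+3)*(t+1)*A ≤ (t+2*u+3)*(t+1)*(4*B) := Nat.mul_le_mul_left _ h
    have h5 : (t+2*u+3)*(t+1)*A = (2*u+2)*(2*u+3)*B := hid.symm
    rw [h5, show (t+2*u+3)*(t+1)*(4*B) = (4*((t+2*u+3)*(t+1)))*B by ring] at h6
    exact Nat.le_of_mul_le_mul_right h6 (by omega)
  have : 2*(u+1)^2 ≤ (t+u+2)^2 := by nlinarith [key]
  simpa using this


/-- If `k_m ∈ {0, …, m}` maximizes `k ↦ 16^k C(m+k-1, m-k)²` on `{0, …, m}` for each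
`m ≥ 1`, then `k_m / m → 1/√2` as `m → ∞`. -/
theorem variance_summand_peak (k : ℕ → ℕ)
    (hk_mem : ∀ m, 1 ≤ m → k m ≤ m)
    (hk_max : ∀ m, 1 ≤ m → ∀ j ≤ m,
      (16 : ℝ) ^ j * (((m + j - 1).choose (m - j) : ℝ)) ^ 2
        ≤ (16 : ℝ) ^ (k m) * (((m + k m - 1).choose (m - k m) : ℝ)) ^ 2) :
    Tendsto (fun m : ℕ => (k m : ℝ) / m) atTop (nhds (1 / Real.sqrt 2)) := by
  -- Step 1 : k m ≥ 1
  have step1 : ∀ m, 1 ≤ m → 1 ≤ k m := by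
    intro m hm
    by_contra h0
    have hk0 : k m = 0 := by omega
    have h := hk_max m hm 1 hm
    rw [hk0] at h
    simp only [pow_zero, pow_one, one_mul] at h
    rw [show m + 1 - 1 = m by omega, show m - 0 = m by omega, show m + 0 - 1 = m - 1 by omega,
        Nat.choose_eq_zero_of_lt (by omega : m - 1 < m)] at h
    have h1 : m.choose (m-1) = m := by
      rw [show m - 1 = m - 1 from rfl, Nat.choose_symm (by omega : 1 ≤ m), Nat.choose_one_right]
    rw [h1] at h
    have : (1:ℝ) ≤ (m:ℝ) := by exact_mod_cast hm
    norm_num at h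
    nlinarith
  -- Step 2 : for m ≥ 4, k m + 1 ≤ m
  have step2 : ∀ m, 4 ≤ m → k m + 1 ≤ m := by
    intro m hm
    have hmem := hk_mem m (by omega)
    by_contra h0
    have hkm : k m = m := by omega
    have h := hk_max m (by omega) (m-1) (by omega)
    rw [hkm] at h
    rw [show m + (m-1) - 1 = 2*m-2 by omega, show m - (m-1) = 1 by omega,
        show m + m - 1 = 2*m-1 by omega, show m - m = 0 by omega,
        Nat.choose_zero_right, Nat.choose_one_right] at h
    simp only [Nat.cast_one, one_pow, mul_one] at h
    have h16 : (0:ℝ) < (16:ℝ)^(m-1) := by positivity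
    have e : (16:ℝ)^m = (16:ℝ)^(m-1)*16 := by rw [← pow_succ]; congr 1; omega
    rw [e] at h
    have h2 : ((2*m-2 : ℕ):ℝ)^2 ≤ 16 := (mul_le_mul_iff_right₀ h16).mp h
    have h3 : ((2*m-2 : ℕ):ℝ) ≥ 6 := by
      have : (6:ℕ) ≤ 2*m-2 := by omega
      exact_mod_cast this
    nlinarith
  -- key inequalities
  have key1 : ∀ m, 4 ≤ m → 4*m^2 ≤ 8*(k m)^2 + 2*(k m) := by
    intro m hm
    have hmem := step2 m hm
    have hk1 := step1 m (by omega)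
    have h := hk_max m (by omega) (k m + 1) hmem
    rw [show m + (k m + 1) - 1 = m + k m by omega,
        show m - (k m + 1) = m - k m - 1 by omega, pow_succ] at h
    have h16 : (0:ℝ) < (16:ℝ)^(k m) := by positivity
    have h2 : (16:ℝ) * (((m+k m).choose (m - k m - 1) : ℕ):ℝ)^2
        ≤ (((m + k m - 1).choose (m - k m) : ℕ):ℝ)^2 :=
      (mul_le_mul_iff_right₀ h16).mp (by rw [mul_assoc] at h; exact h)
    have h3 : 16 * ((m+k m).choose (m-k m-1))^2 ≤ ((m+k m-1).choose (m-k m))^2 := by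
      exact_mod_cast h2
    have h4 : 4 * ((m+k m).choose (m-k m-1)) ≤ (m+k m-1).choose (m-k m) := by
      have hp : (4 * ((m+k m).choose (m-k m-1)))^2 ≤ ((m+k m-1).choose (m-k m))^2 := by
        nlinarith [h3]
      exact (Nat.pow_le_pow_iff_left (by norm_num : (2:ℕ) ≠ 0)).mp hp
    exact lower_nat m (k m) hk1 hmem h4
  have key2 : ∀ m, 4 ≤ m → 2*(k m - 1)^2 ≤ m^2 := by
    intro m hm
    have hk1 := step1 m (by omega)
    have hmem := hk_mem m (by omega)
    rcases Nat.lt_or_ge (k m) 2 with hk2 | hk2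
    · have e0 : k m - 1 = 0 := by omega
      simp [e0]
    · have h := hk_max m (by omega) (k m - 1) (by omega)
      rw [show m + (k m - 1) - 1 = m + k m - 2 by omega,
          show m - (k m - 1) = m - k m + 1 by omega] at h
      have e : (16:ℝ)^(k m) = (16:ℝ)^(k m - 1)*16 := by rw [← pow_succ]; congr 1; omega
      rw [e] at h
      have h16 : (0:ℝ) < (16:ℝ)^(k m - 1) := by positivity
      have h2 : (((m+k m-2).choose (m-k m+1):ℕ):ℝ)^2
          ≤ 16 * (((m+k m-1).choose (m-k m):ℕ):ℝ)^2 :=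
        (mul_le_mul_iff_right₀ h16).mp (by rw [mul_assoc] at h; exact h)
      have h3 : ((m+k m-2).choose (m-k m+1))^2 ≤ 16 * ((m+k m-1).choose (m-k m))^2 := by
        exact_mod_cast h2
      have h4 : (m+k m-2).choose (m-k m+1) ≤ 4 * ((m+k m-1).choose (m-k m)) := by
        have hp : ((m+k m-2).choose (m-k m+1))^2 ≤ (4 * ((m+k m-1).choose (m-k m)))^2 := by
          nlinarith [h3]
        exact (Nat.pow_le_pow_iff_left (by norm_num : (2:ℕ) ≠ 0)).mp hp
      exact upper_nat m (k m) hk2 hmem h4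
  -- lower bound eventually
  have hle1 : ∀ᶠ m : ℕ in atTop, Real.sqrt (1/2 - 1/(4*(m:ℝ))) ≤ (k m : ℝ)/m := by
    filter_upwards [eventually_ge_atTop 4] with m hm
    have hm0 : (0:ℝ) < m := by positivity
    have hA : 2*m^2 ≤ 4*(k m)^2 + m := by
      have := key1 m hm
      have hmem := hk_mem m (by omega)
      nlinarith [this, hmem]
    have hAr : (2:ℝ)*(m:ℝ)^2 ≤ 4*((k m:ℝ))^2 + m := by exact_mod_cast hA
    have h1 : (1:ℝ)/2 - 1/(4*(m:ℝ)) ≤ ((k m:ℝ)/m)^2 := by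
      rw [div_pow, le_div_iff₀ (by positivity : (0:ℝ) < (m:ℝ)^2)]
      have e : ((1:ℝ)/2 - 1/(4*(m:ℝ)))*(m:ℝ)^2 = (m:ℝ)^2/2 - m/4 := by
        field_simp
      rw [e]; linarith
    calc Real.sqrt (1/2 - 1/(4*(m:ℝ))) ≤ Real.sqrt (((k m:ℝ)/m)^2) := Real.sqrt_le_sqrt h1
      _ = (k m:ℝ)/m := Real.sqrt_sq (by positivity)
  -- upper bound eventually
  have hle2 : ∀ᶠ m : ℕ in atTop, (k m : ℝ)/m ≤ 1/(m:ℝ) + 1/Real.sqrt 2 := by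
    filter_upwards [eventually_ge_atTop 4] with m hm
    have hm0 : (0:ℝ) < m := by positivity
    have hk1 := step1 m (by omega)
    have h := key2 m hm
    have hc : ((k m - 1 : ℕ):ℝ) = (k m:ℝ) - 1 := by
      push_cast [Nat.cast_sub hk1]; ring
    have hr : (2:ℝ)*((k m:ℝ) - 1)^2 ≤ (m:ℝ)^2 := by
      have h5 : ((2*(k m - 1)^2 : ℕ):ℝ) ≤ ((m^2 : ℕ):ℝ) := by exact_mod_cast h
      push_cast [hc] at h5
      linarith [h5]
    have hknn : (0:ℝ) ≤ (k m:ℝ) - 1 := by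
      have : (1:ℝ) ≤ (k m:ℝ) := by exact_mod_cast hk1
      linarith
    have hs2 : (0:ℝ) < Real.sqrt 2 := Real.sqrt_pos.mpr (by norm_num)
    have h2 : (k m:ℝ) - 1 ≤ (m:ℝ) / Real.sqrt 2 := by
      rw [le_div_iff₀ hs2]
      calc ((k m:ℝ)-1)*Real.sqrt 2
          = Real.sqrt (((k m:ℝ)-1)^2) * Real.sqrt 2 := by rw [Real.sqrt_sq hknn]
        _ = Real.sqrt (((k m:ℝ)-1)^2 * 2) := (Real.sqrt_mul (sq_nonneg _) 2).symm
        _ ≤ Real.sqrt ((m:ℝ)^2) := Real.sqrt_le_sqrt (by linarith)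
        _ = m := Real.sqrt_sq (by positivity)
    have h3 : (k m:ℝ) ≤ 1 + (m:ℝ)/Real.sqrt 2 := by linarith
    have h4 : (k m:ℝ)/m ≤ (1 + (m:ℝ)/Real.sqrt 2)/m := by gcongr
    have e : ((1:ℝ) + (m:ℝ)/Real.sqrt 2)/m = 1/(m:ℝ) + 1/Real.sqrt 2 := by
      rw [add_div, div_right_comm, div_self hm0.ne']
    rw [e] at h4; exact h4
  -- limits of the bounding sequences
  have l0 : Tendsto (fun m : ℕ => 1/(4*(m:ℝ))) atTop (nhds 0) := by
    have h4 := tendsto_one_div_atTop_nhds_zero_nat.div_const (4:ℝ)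
    simp only [div_div] at h4
    simpa [mul_comm] using h4
  have l1 : Tendsto (fun m : ℕ => Real.sqrt (1/2 - 1/(4*(m:ℝ)))) atTop
      (nhds (1/Real.sqrt 2)) := by
    have h0 : Tendsto (fun m : ℕ => (1:ℝ)/2 - 1/(4*(m:ℝ))) atTop (nhds ((1:ℝ)/2)) := by
      simpa using tendsto_const_nhds.sub l0
    have hcomp := (Real.continuous_sqrt.tendsto ((1:ℝ)/2)).comp h0
    have e : Real.sqrt ((1:ℝ)/2) = 1/Real.sqrt 2 := by
      rw [show (1:ℝ)/2 = 2⁻¹ by norm_num, Real.sqrt_inv, one_div]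
    rw [e] at hcomp
    exact hcomp
  have l2 : Tendsto (fun m : ℕ => 1/(m:ℝ) + 1/Real.sqrt 2) atTop
      (nhds (1/Real.sqrt 2)) := by
    simpa using tendsto_one_div_atTop_nhds_zero_nat.add
      (tendsto_const_nhds : Tendsto (fun _ : ℕ => 1/Real.sqrt 2) atTop _)
  exact tendsto_of_tendsto_of_tendsto_of_le_of_le' l1 l2 hle1 hle2
end

section
/- For every integer M ≥ 1, the map φ_M(z) = 2^{2/M} · z · (1 − z^M)^{−2/M}, where the power (1 − z^M)^{−2/M} = exp(−(2/M)·Log(1 − z^M)) uses the principal logarithm (well defined since Re(1 − z^M) > 0 for |z| < 1), is an analytic bijection from the open unit disk 𝔻 onto the M-cut plane Ω_M = ℂ ∖ ⋃_{j=0}^{M−1} {r·e^{iπ(2j+1)/M} : r ≥ 1}, and φ_M(0) = 0. -/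
open Complex

/-- The `M`-cut conformal map `φ_M(z) = 2^{2/M} · z · (1 - z^M)^{-2/M}`,
with principal branch powers. -/
noncomputable def mCutMap (M : ℕ) (z : ℂ) : ℂ :=
  (2 : ℂ) ^ ((2 : ℂ) / M) * z * (1 - z ^ M) ^ (-(2 : ℂ) / M)

/-- The `M`-cut plane: `ℂ` minus the `M` symmetric radial cuts running from the
`M`-th roots of `-1` out to infinity. -/
noncomputable def mCutPlane (M : ℕ) : Set ℂ :=
  (⋃ j ∈ Finset.range M,
    {ω : ℂ | ∃ r : ℝ, 1 ≤ r ∧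
      ω = (r : ℂ) * Complex.exp (((Real.pi * (2 * j + 1) / M : ℝ) : ℂ) * Complex.I)})ᶜ

lemma phi_pow (M : ℕ) (hM : 1 ≤ M) (z : ℂ) :
    (mCutMap M z) ^ M = 4 * z ^ M * ((1 - z ^ M) ^ 2)⁻¹ := by
  have hM0 : (M : ℂ) ≠ 0 := Nat.cast_ne_zero.mpr (by omega)
  unfold mCutMap
  rw [mul_pow, mul_pow, ← Complex.cpow_nat_mul, ← Complex.cpow_nat_mul,
    show (M : ℂ) * ((2 : ℂ) / M) = ((2 : ℕ) : ℂ) by field_simp; try ring,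
    show (M : ℂ) * (-(2 : ℂ) / M) = ((-2 : ℤ) : ℂ) by push_cast; field_simp; try ring,
    Complex.cpow_natCast, Complex.cpow_intCast,
    zpow_neg, show (2:ℤ) = ((2:ℕ):ℤ) from rfl, zpow_natCast]
  norm_num

lemma quad_no_root {s : ℝ} (hs : 1 ≤ s) {u : ℂ} (hu : ‖u‖ < 1)
    (h : 4 * u = -(s : ℂ) * (1 - u) ^ 2) : False := by
  have h1 : (s : ℂ) * u ^ 2 + (4 - 2 * s) * u + s = 0 := by linear_combination h
  have h2 : (s : ℂ) * (starRingEnd ℂ u) ^ 2 + (4 - 2 * s) * (starRingEnd ℂ u) + s = 0 := by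
    have := congrArg (starRingEnd ℂ) h1
    simpa [map_ofNat] using this
  by_cases hc : (starRingEnd ℂ) u = u
  · have him : u.im = 0 := Complex.conj_eq_iff_im.mp hc
    set x := u.re with hx
    have hxe : u = (x : ℂ) := Complex.ext rfl him
    have hre : s * x ^ 2 + (4 - 2 * s) * x + s = 0 := by
      rw [hxe] at h1
      exact_mod_cast congrArg Complex.re h1
    have hxa : |x| < 1 := by
      rw [hxe] at hu; simpa using hu
    rw [abs_lt] at hxa
    nlinarith [sq_nonneg (1 + x), sq_nonneg (1 - x)]
  · have hne : u - starRingEnd ℂ u ≠ 0 := sub_ne_zero.mpr fun h => hc h.symm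
    have hfac : (u - starRingEnd ℂ u) * ((s : ℂ) * (u + starRingEnd ℂ u) + (4 - 2 * s)) = 0 := by
      linear_combination h1 - h2
    have hsum : (s : ℂ) * (u + starRingEnd ℂ u) + (4 - 2 * s) = 0 :=
      (mul_eq_zero.mp hfac).resolve_left hne
    have hkey : (s : ℂ) * (1 - u * starRingEnd ℂ u) = 0 := by
      linear_combination h1 - u * hsum
    have hs0 : (s : ℂ) ≠ 0 := by
      simp only [ne_eq, Complex.ofReal_eq_zero]; linarith
    have huu : u * starRingEnd ℂ u = 1 := by
      have := (mul_eq_zero.mp hkey).resolve_left hs0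
      linear_combination -this
    have hn1 : (Complex.normSq u : ℂ) = 1 := by rw [← Complex.mul_conj]; exact huu
    have hn2 : Complex.normSq u = 1 := by exact_mod_cast hn1
    have : Complex.normSq u < 1 := by
      have := Complex.sq_norm u
      nlinarith [norm_nonneg u]
    linarith

lemma exp_cut_pow (M j : ℕ) (hM : 1 ≤ M) :
    Complex.exp (((Real.pi * (2 * j + 1) / M : ℝ) : ℂ) * Complex.I) ^ M = -1 := by
  have hM0 : (M : ℂ) ≠ 0 := Nat.cast_ne_zero.mpr (by omega)
  rw [← Complex.exp_nat_mul,
    show (M : ℂ) * (((Real.pi * (2 * j + 1) / M : ℝ) : ℂ) * Complex.I)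
      = ((2 * j + 1 : ℕ) : ℂ) * (Real.pi * Complex.I) by push_cast; field_simp [hM0],
    Complex.exp_nat_mul, Complex.exp_pi_mul_I]
  exact Odd.neg_one_pow ⟨j, by ring⟩

lemma mem_cut {M : ℕ} (hM : 1 ≤ M) {ω : ℂ} {t : ℝ} (ht1 : t ≤ -1) (ht : ω ^ M = (t : ℂ)) :
    ∃ j < M, ∃ r : ℝ, 1 ≤ r ∧
      ω = (r : ℂ) * Complex.exp (((Real.pi * (2 * j + 1) / M : ℝ) : ℂ) * Complex.I) := by
  have hM0 : (M : ℝ) ≠ 0 := Nat.cast_ne_zero.mpr (by omega)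
  have hMZ : (M : ℤ) ≠ 0 := by exact_mod_cast Nat.cast_ne_zero.mpr (show M ≠ 0 by omega)
  have hω : ω ≠ 0 := by
    intro h; rw [h, zero_pow (by omega)] at ht
    have : t = 0 := by exact_mod_cast ht.symm
    linarith
  set a := ‖ω‖ with ha
  have habs : a ^ M = -t := by
    have := congrArg (‖·‖) ht
    rw [norm_pow] at this
    rw [this, Complex.norm_real, Real.norm_eq_abs, abs_of_nonpos (by linarith)]
  have hr1 : 1 ≤ a := by
    by_contra h
    push_neg at h
    have : a ^ M < 1 := pow_lt_one₀ (norm_nonneg ω) h (by omega)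
    linarith
  have hpolar : ω = (a : ℂ) * Complex.exp (ω.arg * Complex.I) :=
    (Complex.norm_mul_exp_arg_mul_I ω).symm
  have htC : (t : ℂ) ≠ 0 := Complex.ofReal_ne_zero.mpr (by linarith)
  have hexp : Complex.exp ((M : ℂ) * (ω.arg * Complex.I)) = Complex.exp (Real.pi * Complex.I) := by
    rw [Complex.exp_pi_mul_I]
    have h1 : ((a : ℂ)) ^ M * Complex.exp ((M : ℂ) * (ω.arg * Complex.I)) = (t : ℂ) := by
      rw [Complex.exp_nat_mul, ← mul_pow, ← hpolar, ht]
    have h2 : ((a : ℂ)) ^ M = -(t : ℂ) := by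
      have := congrArg (fun x : ℝ => (x : ℂ)) habs
      push_cast at this
      exact this
    rw [h2] at h1
    apply mul_left_cancel₀ (neg_ne_zero.mpr htC)
    rw [h1]; ring
  obtain ⟨n, hn⟩ := Complex.exp_eq_exp_iff_exists_int.mp hexp
  have harg : (M : ℝ) * ω.arg = Real.pi + n * (2 * Real.pi) := by
    have := congrArg Complex.im hn
    simpa using this
  set j : ℕ := (n % (M : ℤ)).toNat with hj
  have hjM : j < M := by
    have h1 : n % (M : ℤ) < (M : ℤ) := Int.emod_lt_of_pos n (by omega)
    omega
  have hjn : (j : ℤ) = n % (M : ℤ) := Int.toNat_of_nonneg (Int.emod_nonneg n hMZ)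
  set q : ℤ := n / (M : ℤ) with hq
  have hnq : n = (M : ℤ) * q + j := by rw [hjn, hq]; exact (Int.mul_ediv_add_emod n M).symm
  refine ⟨j, hjM, a, hr1, ?_⟩
  rw [hpolar]
  congr 1
  have hargj : (ω.arg : ℂ) * Complex.I
      = ((Real.pi * (2 * j + 1) / M : ℝ) : ℂ) * Complex.I + (q : ℂ) * (2 * Real.pi * Complex.I) := by
    have : ω.arg = Real.pi * (2 * j + 1) / M + q * (2 * Real.pi) := by
      have hn' : (n : ℝ) = (M : ℝ) * q + j := by exact_mod_cast hnq
      field_simp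
      linear_combination harg + 2 * Real.pi * hn'
    rw [this]; push_cast; ring
  rw [hargj, Complex.exp_add, Complex.exp_int_mul_two_pi_mul_I, mul_one]

lemma mem_mCutPlane_iff {M : ℕ} {ω : ℂ} : ω ∈ mCutPlane M ↔
    ∀ j < M, ∀ r : ℝ, 1 ≤ r →
      ω ≠ (r : ℂ) * Complex.exp (((Real.pi * (2 * j + 1) / M : ℝ) : ℂ) * Complex.I) := by
  simp only [mCutPlane, Set.mem_compl_iff, Set.mem_iUnion, Finset.mem_range, Set.mem_setOf_eq,
    not_exists, not_and]

/-- For every integer `M ≥ 1`, the map `φ_M` is an analytic bijection from the open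
unit disk onto the `M`-cut plane `Ω_M`, with `φ_M(0) = 0`. -/
theorem mCutMap_analytic_bijection (M : ℕ) (hM : 1 ≤ M) :
    AnalyticOnNhd ℂ (mCutMap M) (Metric.ball (0 : ℂ) 1) ∧
    Set.BijOn (mCutMap M) (Metric.ball (0 : ℂ) 1) (mCutPlane M) ∧
    mCutMap M 0 = 0 := by
  have hMn : M ≠ 0 := by omega
  have hzero : mCutMap M 0 = 0 := by simp [mCutMap]
  have habsp : ∀ z : ℂ, z ∈ Metric.ball (0 : ℂ) 1 → ‖z ^ M‖ < 1 := by
    intro z hz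
    rw [mem_ball_zero_iff] at hz
    rw [norm_pow]
    exact pow_lt_one₀ (norm_nonneg z) hz hMn
  have hne1 : ∀ z : ℂ, ‖z ^ M‖ < 1 → (1 : ℂ) - z ^ M ≠ 0 := by
    intro z h hh
    have h2 : z ^ M = 1 := by linear_combination -hh
    rw [h2] at h; simp at h
  refine ⟨?_, ⟨?_, ?_, ?_⟩, hzero⟩
  · -- analytic
    intro z hz
    have h1 : (1 : ℂ) - z ^ M ∈ Complex.slitPlane := by
      rw [Complex.mem_slitPlane_iff]
      left
      have h2 := habsp z hz
      have hre : (z ^ M).re ≤ ‖z ^ M‖ := Complex.re_le_norm _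
      simp only [Complex.sub_re, Complex.one_re]
      linarith
    exact ((analyticAt_const.mul analyticAt_id).mul
      ((analyticAt_const.sub ((analyticAt_id).pow M)).cpow analyticAt_const h1))
  · -- MapsTo
    intro z hz
    rw [mem_mCutPlane_iff]
    intro j hj r hr heq
    have hpow := phi_pow M hM z
    rw [heq, mul_pow, exp_cut_pow M j hM] at hpow
    have hu := habsp z hz
    have hne := hne1 z hu
    have hd : ((1 : ℂ) - z ^ M) ^ 2 ≠ 0 := pow_ne_zero _ hne
    have hs : (1 : ℝ) ≤ r ^ M := one_le_pow₀ hr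
    apply quad_no_root hs hu (u := z ^ M)
    push_cast
    field_simp at hpow
    linear_combination -hpow
  · -- InjOn
    intro z₁ h₁ z₂ h₂ heq
    have hu₁ := habsp z₁ h₁
    have hu₂ := habsp z₂ h₂
    have hne₁ := hne1 z₁ hu₁
    have hne₂ := hne1 z₂ hu₂
    have hpow : 4 * z₁ ^ M * ((1 - z₁ ^ M) ^ 2)⁻¹ = 4 * z₂ ^ M * ((1 - z₂ ^ M) ^ 2)⁻¹ := by
      rw [← phi_pow M hM, ← phi_pow M hM, heq]
    have hcross : z₁ ^ M * (1 - z₂ ^ M) ^ 2 = z₂ ^ M * (1 - z₁ ^ M) ^ 2 := by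
      field_simp at hpow
      linear_combination hpow
    have hfac : (z₁ ^ M - z₂ ^ M) * (1 - z₁ ^ M * z₂ ^ M) = 0 := by
      linear_combination hcross
    have hMeq : z₁ ^ M = z₂ ^ M := by
      rcases mul_eq_zero.mp hfac with h | h
      · linear_combination h
      · exfalso
        have h3 : z₁ ^ M * z₂ ^ M = 1 := by linear_combination -h
        have : ‖z₁ ^ M * z₂ ^ M‖ < 1 := by
          rw [norm_mul]
          calc ‖z₁ ^ M‖ * ‖z₂ ^ M‖
              ≤ ‖z₁ ^ M‖ * 1 := by
                exact mul_le_mul_of_nonneg_left hu₂.le (norm_nonneg _)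
            _ < 1 := by rw [mul_one]; exact hu₁
        rw [h3] at this; simp at this
    have hA : (2 : ℂ) ^ ((2 : ℂ) / M) ≠ 0 := by
      intro h
      rw [Complex.cpow_eq_zero_iff] at h
      exact two_ne_zero h.1
    have hB : ((1 : ℂ) - z₂ ^ M) ^ (-(2 : ℂ) / M) ≠ 0 := by
      intro h
      rw [Complex.cpow_eq_zero_iff] at h
      exact hne₂ h.1
    have heq2 : (2 : ℂ) ^ ((2 : ℂ) / M) * z₁ * (1 - z₂ ^ M) ^ (-(2 : ℂ) / M)
        = (2 : ℂ) ^ ((2 : ℂ) / M) * z₂ * (1 - z₂ ^ M) ^ (-(2 : ℂ) / M) := by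
      have := heq
      unfold mCutMap at this
      rw [hMeq] at this
      exact this
    have := mul_right_cancel₀ hB heq2
    exact mul_left_cancel₀ hA this
  · -- SurjOn
    intro ω hω
    rw [mem_mCutPlane_iff] at hω
    by_cases hω0 : ω = 0
    · exact ⟨0, by simp, by rw [hzero, hω0]⟩
    · set t := ω ^ M with ht
      have htne : t ≠ 0 := pow_ne_zero _ hω0
      have hΩ : ∀ s : ℝ, s ≤ -1 → t ≠ (s : ℂ) := by
        intro s hs habs
        obtain ⟨j, hj, r, hr, hωr⟩ := mem_cut hM hs habs
        exact hω j hj r hr hωr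
      obtain ⟨v0, hv0⟩ := Complex.isAlgClosed.exists_pow_nat_eq (t + 1) two_pos
      have hv : ∃ v : ℂ, v ^ 2 = t + 1 ∧ 0 < v.re := by
        rcases lt_trichotomy v0.re 0 with h | h | h
        · exact ⟨-v0, by rw [neg_pow]; simpa using hv0, by simpa using neg_pos.mpr h⟩
        · exfalso
          have htim : t.im = 0 := by
            have h2 := congrArg Complex.im hv0
            rw [Complex.add_im, Complex.one_im, pow_two, Complex.mul_im, h] at h2
            simpa using h2.symm
          have htre : t.re ≤ -1 := by
            have h3 := congrArg Complex.re hv0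
            rw [Complex.add_re, Complex.one_re, pow_two, Complex.mul_re, h] at h3
            nlinarith [sq_nonneg v0.im]
          exact hΩ t.re htre (Complex.ext rfl (by rw [htim, Complex.ofReal_im]))
        · exact ⟨v0, hv0, h⟩
      obtain ⟨v, hv2, hvre⟩ := hv
      have hv1 : v + 1 ≠ 0 := by
        intro h
        have := congrArg Complex.re h
        simp [Complex.add_re] at this
        linarith
      set u := (v - 1) / (v + 1) with hu
      have habs1 : ‖v - 1‖ < ‖v + 1‖ := by
        have hn1 : Complex.normSq (v - 1) < Complex.normSq (v + 1) := by
          simp only [Complex.normSq_apply, Complex.sub_re, Complex.sub_im, Complex.add_re,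
            Complex.add_im, Complex.one_re, Complex.one_im]
          nlinarith [hvre]
        have h2 := Real.sqrt_lt_sqrt (Complex.normSq_nonneg _) hn1
        simpa [Complex.norm_def] using h2
      have hu1 : ‖u‖ < 1 := by
        rw [hu, norm_div, div_lt_one (norm_pos_iff.mpr hv1)]
        exact habs1
      have hku : 4 * u = t * (1 - u) ^ 2 := by
        rw [hu]
        field_simp
        linear_combination 4 * hv2
      obtain ⟨z₀, hz₀⟩ := Complex.isAlgClosed.exists_pow_nat_eq u (show 0 < M by omega)
      have hz₀b : z₀ ∈ Metric.ball (0 : ℂ) 1 := by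
        rw [mem_ball_zero_iff]
        by_contra h
        push_neg at h
        have h1 : (1 : ℝ) ≤ ‖z₀‖ ^ M := one_le_pow₀ h
        rw [← norm_pow, hz₀] at h1
        linarith
      have h1u : (1 : ℂ) - u ≠ 0 := by
        intro h
        have h2 : u = 1 := by linear_combination -h
        rw [h2] at hu1
        simp at hu1
      have hφpow : (mCutMap M z₀) ^ M = t := by
        rw [phi_pow M hM z₀, hz₀]
        have hd : ((1 : ℂ) - u) ^ 2 ≠ 0 := pow_ne_zero _ h1u
        field_simp
        linear_combination hku
      have hφne : mCutMap M z₀ ≠ 0 := by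
        intro h
        rw [h, zero_pow hMn] at hφpow
        exact htne hφpow.symm
      set ζ := ω / mCutMap M z₀ with hζ
      have hζM : ζ ^ M = 1 := by
        rw [hζ, div_pow, hφpow, ← ht, div_self htne]
      have hζa : ‖ζ‖ = 1 := by
        have h1 : ‖ζ‖ ^ M = 1 := by rw [← norm_pow, hζM, norm_one]
        rcases lt_trichotomy (‖ζ‖) 1 with h | h | h
        · exfalso
          have := pow_lt_one₀ (norm_nonneg ζ) h hMn
          linarith
        · exact h
        · exfalso
          have := one_lt_pow₀ h hMn
          linarith
      refine ⟨ζ * z₀, ?_, ?_⟩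
      · rw [mem_ball_zero_iff, norm_mul]
        have hn : ‖ζ‖ = 1 := by rw [hζa]
        rw [hn, one_mul]
        exact mem_ball_zero_iff.mp hz₀b
      · have hzM : (ζ * z₀) ^ M = z₀ ^ M := by rw [mul_pow, hζM, one_mul]
        have hfin : mCutMap M (ζ * z₀) = ζ * mCutMap M z₀ := by
          unfold mCutMap
          rw [hzM]
          ring
        rw [hfin, hζ, div_mul_cancel₀ _ hφne]
end

section
/- Let (r_j)_{j≥0} be independent random variables, each uniformly distributed on [−1,1], and for k ≥ 1 set n_k = Σ_{j=1}^k r_j 4^j C(k+j−1, k−j) (the k-th Taylor coefficient of the composition of the random series Σ_j r_j ω^j with the one-cut conformal map φ(z) = 4z/(1−z)²). Then almost surely limsup_{k→∞} |n_k|^{1/k} = (1+√2)² = 3 + 2√2. -/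
open MeasureTheory ProbabilityTheory Filter

section OneCutAuxSection
open Finset
namespace OneCutAux



noncomputable def al : ℝ := 3 + 2 * Real.sqrt 2
noncomputable def be : ℝ := 3 - 2 * Real.sqrt 2

lemma sqrt2_sq : Real.sqrt 2 * Real.sqrt 2 = 2 := Real.mul_self_sqrt (by norm_num)
lemma sqrt2_lt : Real.sqrt 2 < 3/2 := by
  nlinarith [sqrt2_sq, Real.sqrt_nonneg 2]
lemma sqrt2_gt : 1 < Real.sqrt 2 := by
  nlinarith [sqrt2_sq, Real.sqrt_nonneg 2]
lemma al_gt : 2 < al := by unfold al; nlinarith [sqrt2_gt]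
lemma be_pos : 0 < be := by unfold be; nlinarith [sqrt2_lt]
lemma be_lt : be < 1 := by unfold be; nlinarith [sqrt2_gt]

def ca (k i : ℕ) : ℕ := 4 ^ (i+1) * Nat.choose (k+i) (2*i+1)
def cb (k i : ℕ) : ℕ := 4 ^ (i+1) * Nat.choose (k+i) (2*i)

def T (k : ℕ) : ℕ := ∑ i ∈ range k, ca k i
def U (k : ℕ) : ℕ := ∑ i ∈ range (k+1), cb k i

lemma ca_zero {k i : ℕ} (h : k ≤ i) : ca k i = 0 := by
  unfold ca
  rw [Nat.choose_eq_zero_of_lt (by omega), mul_zero]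

lemma cb_zero {k i : ℕ} (h : k < i) : cb k i = 0 := by
  unfold cb
  rw [Nat.choose_eq_zero_of_lt (by omega), mul_zero]

lemma T_eq {k M : ℕ} (h : k ≤ M) : ∑ i ∈ range M, ca k i = T k := by
  unfold T
  rw [← Finset.sum_subset (Finset.range_subset_range.2 h)]
  intro x _ hx
  exact ca_zero (by simpa using hx)

lemma U_eq {k M : ℕ} (h : k + 1 ≤ M) : ∑ i ∈ range M, cb k i = U k := by
  unfold U
  rw [← Finset.sum_subset (Finset.range_subset_range.2 h)]
  intro x _ hx
  exact cb_zero (by simp at hx; omega)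

lemma Trec (k : ℕ) : T (k+1) = T k + U k := by
  have h1 : ∀ i, ca (k+1) i = ca k i + cb k i := by
    intro i
    unfold ca cb
    have : k + 1 + i = (k + i) + 1 := by omega
    rw [this, Nat.choose_succ_succ (k+i) (2*i)]
    ring
  unfold T
  calc ∑ i ∈ range (k+1), ca (k+1) i = ∑ i ∈ range (k+1), (ca k i + cb k i) := by
        exact Finset.sum_congr rfl (fun i _ => h1 i)
    _ = (∑ i ∈ range (k+1), ca k i) + ∑ i ∈ range (k+1), cb k i := Finset.sum_add_distrib
    _ = T k + U k := by rw [T_eq (by omega)]; rfl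

lemma Urec (k : ℕ) : U (k+1) = 4 * T (k+1) + U k := by
  have h1 : ∀ i, cb (k+1) (i+1) = 4 * ca (k+1) i + cb k (i+1) := by
    intro i
    unfold ca cb
    have e1 : k + 1 + (i + 1) = (k + 1 + i) + 1 := by omega
    have e2 : 2 * (i+1) = (2*i+1) + 1 := by omega
    rw [e1, e2, Nat.choose_succ_succ (k+1+i) (2*i+1)]
    have e3 : k + (i+1) = k + 1 + i := by omega
    rw [e3]
    ring
  have hb0 : cb (k+1) 0 = cb k 0 := by unfold cb; simp
  have hT : ∑ i ∈ range (k+1), ca (k+1) i = T (k+1) := T_eq (le_refl _)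
  calc U (k+1) = (∑ i ∈ range (k+1), cb (k+1) (i+1)) + cb (k+1) 0 :=
        Finset.sum_range_succ' (fun i => cb (k+1) i) (k+1)
    _ = (∑ i ∈ range (k+1), (4 * ca (k+1) i + cb k (i+1))) + cb k 0 := by
        rw [hb0]; congr 1; exact Finset.sum_congr rfl (fun i _ => h1 i)
    _ = (4 * ∑ i ∈ range (k+1), ca (k+1) i) + ((∑ i ∈ range (k+1), cb k (i+1)) + cb k 0) := by
        rw [Finset.sum_add_distrib, ← Finset.mul_sum]; ring
    _ = 4 * T (k+1) + U k := by
        rw [hT, ← Finset.sum_range_succ' (fun i => cb k i) (k+1), U_eq (by omega : k + 1 ≤ k + 2)]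

lemma closed_form (k : ℕ) :
    (T k : ℝ) * Real.sqrt 2 = al ^ k - be ^ k ∧
    (U k : ℝ) * Real.sqrt 2 = al ^ k * (al - 1) + be ^ k * (1 - be) := by
  induction k with
  | zero =>
    constructor
    · simp [T]
    · have : U 0 = 4 := by decide
      rw [this]
      unfold al be
      push_cast
      nlinarith [sqrt2_sq]
  | succ k ih =>
    obtain ⟨h1, h2⟩ := ih
    have hT : (T (k+1) : ℝ) * Real.sqrt 2 = al ^ (k+1) - be ^ (k+1) := by
      rw [Trec]
      push_cast
      rw [add_mul, h1, h2]
      ring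
    refine ⟨hT, ?_⟩
    rw [Urec]
    push_cast
    rw [add_mul, mul_assoc, hT, h2]
    have hal : al * al = 6 * al - 1 := by unfold al; nlinarith [sqrt2_sq]
    have hbe : be * be = 6 * be - 1 := by unfold be; nlinarith [sqrt2_sq]
    ring_nf
    nlinarith [hal, hbe, pow_nonneg (le_of_lt be_pos) k, pow_nonneg (by nlinarith [al_gt] : (0:ℝ) ≤ al) k]

lemma T_bounds (k : ℕ) : al ^ k - 1 ≤ (T k : ℝ) * Real.sqrt 2 ∧ (T k : ℝ) * Real.sqrt 2 ≤ al ^ k := by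
  have h := (closed_form k).1
  have h1 : be ^ k ≤ 1 := pow_le_one₀ (le_of_lt be_pos) (le_of_lt be_lt)
  have h2 : 0 < be ^ k := pow_pos be_pos k
  constructor <;> nlinarith

/-- connect to the sum in the theorem -/
lemma S_eq_T (k : ℕ) :
    ∑ j ∈ Icc 1 k, 4 ^ j * Nat.choose (k + j - 1) (k - j) = T k := by
  rw [← Finset.Ico_add_one_right_eq_Icc, Finset.sum_Ico_eq_sum_range]
  have hk : k + 1 - 1 = k := by omega
  rw [hk]
  unfold T
  refine Finset.sum_congr rfl (fun i hi => ?_)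
  simp only [Finset.mem_range] at hi
  unfold ca
  have e1 : k + (1 + i) - 1 = k + i := by omega
  have e2 : 1 + i = i + 1 := by omega
  rw [e1, e2]
  congr 1
  have h : 2*i+1 ≤ k + i := by omega
  have := Nat.choose_symm h
  have e3 : k + i - (2*i+1) = k - (i+1) := by omega
  rw [e3] at this
  exact this




variable {Ω : Type*} [MeasureSpace Ω] [IsProbabilityMeasure (ℙ : Measure Ω)]

lemma vol_Icc : (volume (Set.Icc (-1:ℝ) 1)) = ENNReal.ofReal 2 := by
  rw [Real.volume_Icc]; norm_num

lemma unif_scaled_interval {X : Ω → ℝ}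
    (hu : pdf.IsUniform X (Set.Icc (-1:ℝ) 1) ℙ) {c : ℝ} (hc : 0 < c) (u v : ℝ) :
    ℙ ((fun ω => X ω * c) ⁻¹' Set.Icc u v) ≤ ENNReal.ofReal ((v - u)/(2*c)) := by
  have hns : volume (Set.Icc (-1:ℝ) 1) ≠ 0 := by rw [vol_Icc]; simp
  have hnt : volume (Set.Icc (-1:ℝ) 1) ≠ ⊤ := by rw [vol_Icc]; simp
  have hset : (fun ω => X ω * c) ⁻¹' Set.Icc u v = X ⁻¹' Set.Icc (u/c) (v/c) := by
    ext ω
    simp only [Set.mem_preimage, Set.mem_Icc]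
    constructor
    · rintro ⟨h1, h2⟩; exact ⟨(div_le_iff₀ hc).2 (by linarith), (le_div_iff₀ hc).2 (by linarith)⟩
    · rintro ⟨h1, h2⟩; exact ⟨by nlinarith [(div_le_iff₀ hc).1 h1], by nlinarith [(le_div_iff₀ hc).1 h2]⟩
  rw [hset, pdf.IsUniform.measure_preimage hns hnt hu measurableSet_Icc]
  have h1 : volume (Set.Icc (-1:ℝ) 1 ∩ Set.Icc (u/c) (v/c)) ≤ ENNReal.ofReal ((v-u)/c) := by
    refine le_trans (measure_mono Set.inter_subset_right) ?_
    rw [Real.volume_Icc]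
    apply ENNReal.ofReal_le_ofReal
    rw [div_sub_div_same]
  calc volume (Set.Icc (-1:ℝ) 1 ∩ Set.Icc (u/c) (v/c)) / volume (Set.Icc (-1:ℝ) 1)
      ≤ ENNReal.ofReal ((v-u)/c) / ENNReal.ofReal 2 := by
        rw [vol_Icc]; exact ENNReal.div_le_div_right h1 _
    _ = ENNReal.ofReal ((v-u)/c/2) := (ENNReal.ofReal_div_of_pos (by norm_num)).symm
    _ = ENNReal.ofReal ((v - u)/(2*c)) := by
        rw [div_div, mul_comm]

lemma anticonc (r : ℕ → Ω → ℝ) (hmeas : ∀ j, Measurable (r j))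
    (hindep : iIndepFun r ℙ)
    (hunif : ∀ j, pdf.IsUniform (r j) (Set.Icc (-1 : ℝ) 1) ℙ)
    (k : ℕ) (a : ℕ → ℝ) {j0 : ℕ} (hj0 : j0 ∈ Icc 1 k) (ha : 0 < a j0) (t : ℝ) :
    ℙ {ω | |∑ j ∈ Icc 1 k, r j ω * a j| ≤ t} ≤ ENNReal.ofReal (t / a j0) := by
  classical
  set g : ℕ → Ω → ℝ := fun j ω => r j ω * a j with hg
  have hgmeas : ∀ j, Measurable (g j) := fun j => (hmeas j).mul_const _
  have hgindep : iIndepFun g ℙ := by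
    have := hindep.comp (fun j (x : ℝ) => x * a j) (fun j => measurable_mul_const _)
    exact this
  set s : Finset ℕ := (Icc 1 k).erase j0 with hs
  set Y : Ω → ℝ := ∑ j ∈ s, g j with hY
  set X : Ω → ℝ := g j0 with hX
  have hYmeas : Measurable Y := by
    have h : Measurable (fun ω => ∑ j ∈ s, g j ω) := Finset.measurable_sum s (fun j _ => hgmeas j)
    have he : Y = fun ω => ∑ j ∈ s, g j ω := by
      funext ω; simp [hY, Finset.sum_apply]
    rw [he]; exact h
  have hXmeas : Measurable X := hgmeas j0
  have hind : IndepFun Y X ℙ :=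
    hgindep.indepFun_finsetSum_of_notMem hgmeas (Finset.notMem_erase j0 _)
  have hmap : Measure.map (fun ω => (Y ω, X ω)) ℙ = (Measure.map Y ℙ).prod (Measure.map X ℙ) :=
    (indepFun_iff_map_prod_eq_prod_map_map hYmeas.aemeasurable hXmeas.aemeasurable).mp hind
  set E : Set (ℝ × ℝ) := {p | |p.1 + p.2| ≤ t} with hE
  have hEm : MeasurableSet E :=
    measurableSet_le ((measurable_fst.add measurable_snd).abs) measurable_const
  have hsum : ∀ ω, ∑ j ∈ Icc 1 k, r j ω * a j = Y ω + X ω := by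
    intro ω
    have h0 := congrFun (Finset.add_sum_erase (Icc 1 k) g hj0) ω
    simp only [Pi.add_apply, Finset.sum_apply] at h0
    simp only [hY, hX, Finset.sum_apply]
    linarith [h0]
  have hev : {ω | |∑ j ∈ Icc 1 k, r j ω * a j| ≤ t}
      = (fun ω => (Y ω, X ω)) ⁻¹' E := by
    ext ω; simp only [Set.mem_setOf_eq, Set.mem_preimage, hE, hsum ω]
  rw [hev, ← Measure.map_apply (hYmeas.prodMk hXmeas) hEm, hmap,
    Measure.prod_apply hEm]
  have hslice : ∀ y : ℝ, (Measure.map X ℙ) (Prod.mk y ⁻¹' E) ≤ ENNReal.ofReal (t / a j0) := by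
    intro y
    have h1 : Prod.mk y ⁻¹' E = Set.Icc (-t - y) (t - y) := by
      ext x
      simp only [Set.mem_preimage, hE, Set.mem_setOf_eq, Set.mem_Icc, abs_le]
      constructor <;> rintro ⟨h1, h2⟩ <;> constructor <;> linarith
    rw [h1, Measure.map_apply hXmeas measurableSet_Icc]
    refine le_trans (unif_scaled_interval (hunif j0) ha _ _) ?_
    apply ENNReal.ofReal_le_ofReal
    rw [show (t - y - (-t - y)) = 2 * t by ring]
    rw [mul_div_mul_left t (a j0) (by norm_num)]
  calc ∫⁻ y, (Measure.map X ℙ) (Prod.mk y ⁻¹' E) ∂(Measure.map Y ℙ)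
      ≤ ∫⁻ _, ENNReal.ofReal (t / a j0) ∂(Measure.map Y ℙ) := lintegral_mono hslice
    _ = ENNReal.ofReal (t / a j0) := by
        have : IsProbabilityMeasure (Measure.map Y ℙ) := Measure.isProbabilityMeasure_map hYmeas.aemeasurable
        simp

lemma ae_abs_le {X : Ω → ℝ} (hX : Measurable X)
    (hu : pdf.IsUniform X (Set.Icc (-1:ℝ) 1) ℙ) : ∀ᵐ ω ∂ℙ, |X ω| ≤ 1 := by
  have hns : volume (Set.Icc (-1:ℝ) 1) ≠ 0 := by rw [vol_Icc]; simp
  have hnt : volume (Set.Icc (-1:ℝ) 1) ≠ ⊤ := by rw [vol_Icc]; simp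
  have h1 : ℙ (X ⁻¹' Set.Icc (-1:ℝ) 1) = 1 := by
    rw [pdf.IsUniform.measure_preimage hns hnt hu measurableSet_Icc, Set.inter_self,
      vol_Icc, ENNReal.div_self (by simp) (by simp)]
  have h2 : ℙ (X ⁻¹' Set.Icc (-1:ℝ) 1)ᶜ = 0 := by
    rw [← prob_compl_eq_zero_iff (hX measurableSet_Icc)] at h1
    exact h1
  filter_upwards [measure_eq_zero_iff_ae_notMem.mp h2] with ω hω
  have h3 : ω ∈ X ⁻¹' Set.Icc (-1:ℝ) 1 := by
    by_contra hc; exact hω hc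
  simp only [Set.mem_preimage, Set.mem_Icc] at h3
  rw [abs_le]; exact h3

-- real coefficients
noncomputable def Ak (k j : ℕ) : ℝ := 4 ^ j * ((k + j - 1).choose (k - j) : ℝ)

lemma Ak_nonneg (k j : ℕ) : 0 ≤ Ak k j := by unfold Ak; positivity

lemma T_cast (k : ℕ) : (T k : ℝ) = ∑ j ∈ Icc 1 k, Ak k j := by
  rw [← S_eq_T k]
  push_cast [Ak]
  rfl

lemma al_pos : (0:ℝ) < al := by linarith [al_gt]

lemma Ak_max (k : ℕ) (hk : 1 ≤ k) :
    ∃ j0 ∈ Icc 1 k, 0 < Ak k j0 ∧ (T k : ℝ) ≤ k * Ak k j0 := by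
  obtain ⟨j0, hj0, hmax⟩ := Finset.exists_max_image (Icc 1 k) (Ak k)
    ⟨1, by simp [hk]⟩
  refine ⟨j0, hj0, ?_, ?_⟩
  · simp only [Finset.mem_Icc] at hj0
    unfold Ak
    have : 0 < (k + j0 - 1).choose (k - j0) := Nat.choose_pos (by omega)
    positivity
  · rw [T_cast]
    calc ∑ j ∈ Icc 1 k, Ak k j ≤ (Icc 1 k).card • Ak k j0 :=
          Finset.sum_le_card_nsmul _ _ _ (fun j hj => hmax j hj)
      _ = k * Ak k j0 := by
          rw [Nat.card_Icc]
          simp [nsmul_eq_mul]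

lemma anticonc' (r : ℕ → Ω → ℝ) (hmeas : ∀ j, Measurable (r j))
    (hindep : iIndepFun r ℙ)
    (hunif : ∀ j, pdf.IsUniform (r j) (Set.Icc (-1 : ℝ) 1) ℙ)
    (k : ℕ) (hk : 1 ≤ k) {x : ℝ} (hx0 : 0 ≤ x) (hx1 : x < 1) :
    ℙ {ω | |∑ j ∈ Icc 1 k, r j ω * Ak k j| ≤ (x * al) ^ k}
      ≤ ENNReal.ofReal (2 * Real.sqrt 2 * k * x ^ k) := by
  obtain ⟨j0, hj0, hpos, hTle⟩ := Ak_max k hk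
  refine le_trans (anticonc r hmeas hindep hunif k (Ak k) hj0 hpos _) ?_
  apply ENNReal.ofReal_le_ofReal
  have hk' : (1:ℝ) ≤ (k:ℝ) := by exact_mod_cast hk
  have hs2 : (1:ℝ) < Real.sqrt 2 := sqrt2_gt
  have halk : (2:ℝ) ≤ al ^ k := by
    calc (2:ℝ) ≤ al := le_of_lt al_gt
      _ = al ^ 1 := (pow_one al).symm
      _ ≤ al ^ k := pow_le_pow_right₀ (by linarith [al_gt]) hk
  -- lower bound on Ak k j0
  have h1 : al ^ k / (2 * Real.sqrt 2 * k) ≤ Ak k j0 := by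
    have hT1 : al ^ k - 1 ≤ (T k : ℝ) * Real.sqrt 2 := (T_bounds k).1
    have hT2 : (T k : ℝ) ≤ k * Ak k j0 := hTle
    have h2 : al ^ k / 2 ≤ al ^ k - 1 := by linarith
    rw [div_le_iff₀ (by positivity)]
    nlinarith [Ak_nonneg k j0]
  have hden : (0:ℝ) < al ^ k / (2 * Real.sqrt 2 * k) := by positivity
  have halne : (al:ℝ) ^ k ≠ 0 := ne_of_gt (pow_pos al_pos k)
  calc (x * al) ^ k / Ak k j0
      ≤ (x * al) ^ k / (al ^ k / (2 * Real.sqrt 2 * k)) := by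
        apply div_le_div_of_nonneg_left _ hden h1
        exact pow_nonneg (mul_nonneg hx0 (le_of_lt al_pos)) k
    _ = 2 * Real.sqrt 2 * k * x ^ k := by
        rw [mul_pow, div_div_eq_mul_div]
        field_simp

-- summability
lemma summable_aux {x : ℝ} (hx0 : 0 ≤ x) (hx1 : x < 1) :
    Summable (fun i : ℕ => 2 * Real.sqrt 2 * ((i:ℝ)+1) * x ^ (i+1)) := by
  have h1 : Summable (fun i : ℕ => ((i:ℝ)+1) * x ^ i) := by
    have h2 : Summable (fun i : ℕ => (i:ℝ) * x ^ i) := by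
      have := summable_pow_mul_geometric_of_norm_lt_one (R := ℝ) 1 (by rwa [Real.norm_eq_abs, abs_of_nonneg hx0])
      simpa using this
    have h3 : Summable (fun i : ℕ => x ^ i) := summable_geometric_of_lt_one hx0 hx1
    simpa [add_mul] using h2.add h3
  have h4 : Summable (fun i : ℕ => x * (((i:ℝ)+1) * x ^ i)) := h1.mul_left x
  exact (h4.mul_left (2 * Real.sqrt 2)).congr (fun i => by ring)



theorem main_dev {Ω : Type*} [MeasureSpace Ω]
    [IsProbabilityMeasure (ℙ : Measure Ω)]
    (r : ℕ → Ω → ℝ) (hmeas : ∀ j, Measurable (r j))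
    (hindep : iIndepFun r ℙ)
    (hunif : ∀ j, pdf.IsUniform (r j) (Set.Icc (-1 : ℝ) 1) ℙ) :
    ∀ᵐ ω ∂ℙ, limsup (fun k : ℕ =>
        |∑ j ∈ Finset.Icc 1 k, r j ω * 4 ^ j * ((k + j - 1).choose (k - j) : ℝ)|
          ^ ((k : ℝ)⁻¹)) atTop
      = 3 + 2 * Real.sqrt 2 := by
  classical
  set n : ℕ → Ω → ℝ := fun k ω => ∑ j ∈ Icc 1 k, r j ω * Ak k j with hn
  have hexpr : ∀ k ω, ∑ j ∈ Icc 1 k, r j ω * 4 ^ j * ((k + j - 1).choose (k - j) : ℝ) = n k ω := by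
    intro k ω
    exact Finset.sum_congr rfl (fun j _ => by simp [Ak, mul_assoc])
  set x : ℕ → ℝ := fun m => 1 - ((m:ℝ)+2)⁻¹ with hxdef
  have hx0 : ∀ m, 0 ≤ x m := by
    intro m
    have h2 : (0:ℝ) < (m:ℝ)+2 := by positivity
    have : ((m:ℝ)+2)⁻¹ ≤ 1 := by
      rw [inv_le_one_iff₀]; right; linarith
    simp only [hxdef]; linarith
  have hx1 : ∀ m, x m < 1 := by
    intro m
    have h2 : (0:ℝ) < ((m:ℝ)+2)⁻¹ := by positivity
    simp only [hxdef]; linarith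
  have hBC : ∀ m : ℕ, ∀ᵐ ω ∂ℙ, ∀ᶠ i in atTop,
      ¬ (|n (i+1) ω| ≤ (x m * al)^(i+1)) := by
    intro m
    set s : ℕ → Set Ω := fun i => {ω | |n (i+1) ω| ≤ (x m * al)^(i+1)} with hs
    have hle : ∀ i, ℙ (s i) ≤ ENNReal.ofReal (2*Real.sqrt 2*((i:ℝ)+1)*(x m)^(i+1)) := by
      intro i
      have h := anticonc' r hmeas hindep hunif (i+1) (by omega) (hx0 m) (hx1 m)
      refine le_trans h ?_
      apply ENNReal.ofReal_le_ofReal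
      push_cast
      apply le_of_eq; ring
    have hsum : (∑' i, ℙ (s i)) ≠ ⊤ := by
      have hnn : ∀ i : ℕ, 0 ≤ 2*Real.sqrt 2*((i:ℝ)+1)*(x m)^(i+1) := by
        intro i
        have := Real.sqrt_nonneg 2
        have := hx0 m
        positivity
      have hB : ∑' i, ℙ (s i) ≤ ENNReal.ofReal (∑' i : ℕ, 2*Real.sqrt 2*((i:ℝ)+1)*(x m)^(i+1)) := by
        calc ∑' i, ℙ (s i) ≤ ∑' i : ℕ, ENNReal.ofReal (2*Real.sqrt 2*((i:ℝ)+1)*(x m)^(i+1)) :=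
              ENNReal.tsum_le_tsum hle
          _ = ENNReal.ofReal (∑' i : ℕ, 2*Real.sqrt 2*((i:ℝ)+1)*(x m)^(i+1)) :=
              (ENNReal.ofReal_tsum_of_nonneg hnn (summable_aux (hx0 m) (hx1 m))).symm
      exact ne_top_of_le_ne_top ENNReal.ofReal_ne_top hB
    filter_upwards [ae_eventually_notMem hsum] with ω hω
    exact hω
  rw [← ae_all_iff] at hBC
  have hbdd : ∀ᵐ ω ∂ℙ, ∀ j, |r j ω| ≤ 1 :=
    ae_all_iff.mpr (fun j => ae_abs_le (hmeas j) (hunif j))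
  filter_upwards [hBC, hbdd] with ω hω hbω
  set f : ℕ → ℝ := fun k =>
    |∑ j ∈ Icc 1 k, r j ω * 4 ^ j * ((k + j - 1).choose (k - j) : ℝ)| ^ ((k : ℝ)⁻¹) with hfdef
  have hfn : ∀ k, f k = |n k ω| ^ ((k : ℝ)⁻¹) := by
    intro k; simp only [hfdef, hexpr k ω]
  have hf0 : ∀ k, 0 ≤ f k := fun k => Real.rpow_nonneg (abs_nonneg _) _
  have hupper : ∀ k, 1 ≤ k → f k ≤ al := by
    intro k hk
    have hnb : |n k ω| ≤ al ^ k := by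
      calc |n k ω| ≤ ∑ j ∈ Icc 1 k, |r j ω * Ak k j| := Finset.abs_sum_le_sum_abs _ _
        _ ≤ ∑ j ∈ Icc 1 k, Ak k j := by
            refine Finset.sum_le_sum (fun j _ => ?_)
            rw [abs_mul, abs_of_nonneg (Ak_nonneg k j)]
            exact mul_le_of_le_one_left (Ak_nonneg k j) (hbω j)
        _ = (T k : ℝ) := (T_cast k).symm
        _ ≤ al ^ k := by
            have h1 := (T_bounds k).2
            have h2 : (0:ℝ) ≤ (T k : ℝ) := Nat.cast_nonneg _
            nlinarith [sqrt2_gt]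
    rw [hfn k]
    calc |n k ω| ^ ((k : ℝ)⁻¹) ≤ (al ^ k) ^ ((k : ℝ)⁻¹) :=
          Real.rpow_le_rpow (abs_nonneg _) hnb (by positivity)
      _ = al := Real.pow_rpow_inv_natCast (le_of_lt al_pos) (by omega)
  have hub : ∀ᶠ k in atTop, f k ≤ al := eventually_atTop.2 ⟨1, hupper⟩
  have hbddle : IsBoundedUnder (· ≤ ·) atTop f := ⟨al, eventually_map.mpr hub⟩
  have hcob : IsCoboundedUnder (· ≤ ·) atTop f := isCoboundedUnder_le_of_le atTop hf0
  have h_le : limsup f atTop ≤ al := limsup_le_of_le hcob hub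
  have h_ge : ∀ m, x m * al ≤ limsup f atTop := by
    intro m
    have hxa : 0 ≤ x m * al := mul_nonneg (hx0 m) (le_of_lt al_pos)
    have hev : ∀ᶠ k in atTop, x m * al ≤ f k := by
      rw [eventually_atTop]
      obtain ⟨N, hN⟩ := eventually_atTop.1 (hω m)
      refine ⟨N+1, fun k hk => ?_⟩
      obtain ⟨i, rfl⟩ : ∃ i, k = i+1 := ⟨k-1, by omega⟩
      have h1 := hN i (by omega)
      push_neg at h1
      rw [hfn]
      calc x m * al
          = ((x m * al)^(i+1)) ^ (((i+1 : ℕ) : ℝ))⁻¹ :=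
            (Real.pow_rpow_inv_natCast hxa (by omega)).symm
        _ ≤ |n (i+1) ω| ^ (((i+1 : ℕ) : ℝ))⁻¹ :=
            Real.rpow_le_rpow (by positivity) (le_of_lt h1) (by positivity)
    exact le_limsup_of_frequently_le hev.frequently hbddle
  have htend : Tendsto (fun m : ℕ => x m * al) atTop (nhds al) := by
    have h0 : Tendsto (fun m : ℕ => ((m:ℝ)+2)⁻¹) atTop (nhds 0) :=
      tendsto_inv_atTop_zero.comp (tendsto_atTop_add_const_right atTop (2:ℝ)
        tendsto_natCast_atTop_atTop)
    have h1 : Tendsto x atTop (nhds 1) := by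
      have := (tendsto_const_nhds : Tendsto (fun _ : ℕ => (1:ℝ)) atTop (nhds 1)).sub h0
      simpa using this
    have := h1.mul (tendsto_const_nhds : Tendsto (fun _ : ℕ => al) atTop (nhds al))
    simpa using this
  have h_ge' : al ≤ limsup f atTop := le_of_tendsto htend (Eventually.of_forall h_ge)
  have : limsup f atTop = al := le_antisymm h_le h_ge'
  rw [show (3 + 2 * Real.sqrt 2 : ℝ) = al from rfl]
  exact this


end OneCutAux
end OneCutAuxSection

/-- For independent `r_j` uniform on `[-1,1]`, the Taylor coefficients
`n_k = Σ_{j=1}^k r_j 4^j C(k+j-1, k-j)` of the composition of the random series with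
the one-cut conformal map satisfy, almost surely,
`limsup_k |n_k|^{1/k} = (1+√2)² = 3 + 2√2`. -/
theorem oneCut_noise_coeff_growth {Ω : Type*} [MeasureSpace Ω]
    [IsProbabilityMeasure (ℙ : Measure Ω)]
    (r : ℕ → Ω → ℝ) (hmeas : ∀ j, Measurable (r j))
    (hindep : iIndepFun r ℙ)
    (hunif : ∀ j, pdf.IsUniform (r j) (Set.Icc (-1 : ℝ) 1) ℙ) :
    ∀ᵐ ω ∂ℙ, limsup (fun k : ℕ =>
        |∑ j ∈ Finset.Icc 1 k, r j ω * 4 ^ j * ((k + j - 1).choose (k - j) : ℝ)|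
          ^ ((k : ℝ)⁻¹)) atTop
      = 3 + 2 * Real.sqrt 2 := by
  exact OneCutAux.main_dev r hmeas hindep hunif
end

section
/- Let c > 0 and let j₀ : ℕ → ℝ satisfy j₀(k) ≥ 0 for all k and j₀(k)/√k → ∞ as k → ∞. Then Σ_{j=0}^∞ exp(−(j − j₀(k))²/(2ck)) is asymptotically equivalent to √(2πck) as k → ∞; that is, the ratio of the sum to √(2πck) tends to 1. -/
open Filter

namespace GaussianSumAux

open Real MeasureTheory Set intervalIntegral

variable {s a : ℝ}

private lemma exp_form (hs : 0 < s) (a : ℝ) :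
    (fun x : ℝ => rexp (-(x - a) ^ 2 / s)) = fun x : ℝ => rexp (-(1 / s) * (x - a) ^ 2) := by
  funext x
  congr 1
  field_simp

lemma integrable_F (hs : 0 < s) (a : ℝ) :
    Integrable (fun x : ℝ => rexp (-(x - a) ^ 2 / s)) := by
  rw [exp_form hs a]
  exact (integrable_exp_neg_mul_sq (by positivity)).comp_sub_right a

lemma integral_F (hs : 0 < s) (a : ℝ) :
    ∫ x : ℝ, rexp (-(x - a) ^ 2 / s) = Real.sqrt (π * s) := by
  rw [exp_form hs a]
  rw [MeasureTheory.integral_sub_right_eq_self (fun x : ℝ => rexp (-(1 / s) * x ^ 2)) a]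
  rw [integral_gaussian]
  congr 1
  field_simp

lemma F_nonneg (s a x : ℝ) : 0 ≤ rexp (-(x - a) ^ 2 / s) := (Real.exp_pos _).le

lemma F_le_one (hs : 0 < s) (a x : ℝ) : rexp (-(x - a) ^ 2 / s) ≤ 1 :=
  Real.exp_le_one_iff.2 (div_nonpos_of_nonpos_of_nonneg (neg_nonpos.2 (sq_nonneg _)) hs.le)

lemma mono_F (hs : 0 < s) (a : ℝ) :
    MonotoneOn (fun x : ℝ => rexp (-(x - a) ^ 2 / s)) (Iic a) := by
  intro x hx y hy hxy
  simp only [mem_Iic] at hx hy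
  apply Real.exp_le_exp.2
  apply (div_le_div_iff_of_pos_right hs).2
  nlinarith

lemma anti_F (hs : 0 < s) (a : ℝ) :
    AntitoneOn (fun x : ℝ => rexp (-(x - a) ^ 2 / s)) (Ici a) := by
  intro x hx y hy hxy
  simp only [mem_Ici] at hx hy
  apply Real.exp_le_exp.2
  apply (div_le_div_iff_of_pos_right hs).2
  nlinarith

lemma interval_le_integral (hs : 0 < s) (a : ℝ) {u v : ℝ} (huv : u ≤ v) :
    ∫ x in u..v, rexp (-(x - a) ^ 2 / s) ≤ ∫ x : ℝ, rexp (-(x - a) ^ 2 / s) := by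
  rw [intervalIntegral.integral_of_le huv]
  exact setIntegral_le_integral (integrable_F hs a) (ae_of_all _ fun x => F_nonneg s a x)

lemma summable_F (hs : 0 < s) (ha : 0 ≤ a) :
    Summable (fun j : ℕ => rexp (-((j : ℝ) - a) ^ 2 / s)) := by
  set m := ⌊a⌋₊ with hm
  have hma : a ≤ (m : ℝ) + 1 := (Nat.lt_floor_add_one a).le
  rw [← summable_nat_add_iff (m + 2)]
  apply summable_of_sum_range_le (fun n => F_nonneg s a _)
  intro N
  calc ∑ i ∈ Finset.range N, rexp (-(((i + (m + 2) : ℕ) : ℝ) - a) ^ 2 / s)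
      = ∑ i ∈ Finset.range N, rexp (-((((m : ℝ) + 1) + ((i + 1 : ℕ) : ℝ)) - a) ^ 2 / s) := by
        refine Finset.sum_congr rfl fun i _ => ?_
        congr 2
        push_cast
        ring
    _ ≤ ∫ x in ((m : ℝ) + 1)..(((m : ℝ) + 1) + (N : ℝ)), rexp (-(x - a) ^ 2 / s) := by
        have := AntitoneOn.sum_le_integral (x₀ := (m : ℝ) + 1) (a := N)
          (f := fun x : ℝ => rexp (-(x - a) ^ 2 / s))
          ((anti_F hs a).mono fun x hx => le_trans hma hx.1)
        exact this
    _ ≤ ∫ x : ℝ, rexp (-(x - a) ^ 2 / s) :=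
        interval_le_integral hs a (le_add_of_nonneg_right (Nat.cast_nonneg N))

lemma tsum_le (hs : 0 < s) (ha : 0 ≤ a) :
    (∑' j : ℕ, rexp (-((j : ℝ) - a) ^ 2 / s)) ≤ Real.sqrt (π * s) + 2 := by
  set m := ⌊a⌋₊ with hm
  have hma : a ≤ (m : ℝ) + 1 := (Nat.lt_floor_add_one a).le
  have hm0 : (m : ℝ) ≤ a := Nat.floor_le ha
  have hsumm := summable_F hs ha
  rw [← Summable.sum_add_tsum_nat_add (m + 2) hsumm]
  have h1 : ∑ j ∈ Finset.range (m + 2), rexp (-((j : ℝ) - a) ^ 2 / s)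
      ≤ (∫ x in Ioc (0 : ℝ) m, rexp (-(x - a) ^ 2 / s)) + 2 := by
    rw [Finset.sum_range_succ, Finset.sum_range_succ]
    have hA : ∑ j ∈ Finset.range m, rexp (-((j : ℝ) - a) ^ 2 / s)
        ≤ ∫ x in Ioc (0 : ℝ) m, rexp (-(x - a) ^ 2 / s) := by
      have hmono : MonotoneOn (fun x : ℝ => rexp (-(x - a) ^ 2 / s)) (Icc (0 : ℝ) (0 + m)) :=
        (mono_F hs a).mono fun x hx => le_trans hx.2 (by simpa using hm0)
      have := MonotoneOn.sum_le_integral (x₀ := (0 : ℝ)) (a := m)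
        (f := fun x : ℝ => rexp (-(x - a) ^ 2 / s)) hmono
      rw [intervalIntegral.integral_of_le (by simp [Nat.cast_nonneg])] at this
      simp only [zero_add] at this
      exact this
    have hB := F_le_one hs a ((m : ℝ))
    have hC := F_le_one hs a ((m + 1 : ℕ) : ℝ)
    push_cast at hB hC ⊢
    linarith
  have h2 : (∑' i : ℕ, rexp (-(((i + (m + 2) : ℕ) : ℝ) - a) ^ 2 / s))
      ≤ ∫ x in Ioi ((m : ℝ) + 1), rexp (-(x - a) ^ 2 / s) := by
    apply Real.tsum_le_of_sum_range_le (fun n => F_nonneg s a _)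
    intro N
    calc ∑ i ∈ Finset.range N, rexp (-(((i + (m + 2) : ℕ) : ℝ) - a) ^ 2 / s)
        = ∑ i ∈ Finset.range N, rexp (-((((m : ℝ) + 1) + ((i + 1 : ℕ) : ℝ)) - a) ^ 2 / s) := by
          refine Finset.sum_congr rfl fun i _ => ?_
          congr 2
          push_cast
          ring
      _ ≤ ∫ x in ((m : ℝ) + 1)..(((m : ℝ) + 1) + (N : ℝ)), rexp (-(x - a) ^ 2 / s) :=
          AntitoneOn.sum_le_integral (x₀ := (m : ℝ) + 1) (a := N)
            (f := fun x : ℝ => rexp (-(x - a) ^ 2 / s))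
            ((anti_F hs a).mono fun x hx => le_trans hma hx.1)
      _ ≤ ∫ x in Ioi ((m : ℝ) + 1), rexp (-(x - a) ^ 2 / s) := by
          rw [intervalIntegral.integral_of_le (le_add_of_nonneg_right (Nat.cast_nonneg N))]
          exact setIntegral_mono_set ((integrable_F hs a).integrableOn)
            (ae_of_all _ fun x => F_nonneg s a x)
            (HasSubset.Subset.eventuallyLE Ioc_subset_Ioi_self)
  have h3 : (∫ x in Ioc (0 : ℝ) m, rexp (-(x - a) ^ 2 / s))
      + (∫ x in Ioi ((m : ℝ) + 1), rexp (-(x - a) ^ 2 / s))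
      ≤ ∫ x : ℝ, rexp (-(x - a) ^ 2 / s) := by
    have hIic : (∫ x in Ioc (0 : ℝ) m, rexp (-(x - a) ^ 2 / s))
        ≤ ∫ x in Iic ((m : ℝ) + 1), rexp (-(x - a) ^ 2 / s) :=
      setIntegral_mono_set ((integrable_F hs a).integrableOn)
        (ae_of_all _ fun x => F_nonneg s a x)
        (HasSubset.Subset.eventuallyLE fun x hx => le_trans hx.2 (by linarith))
    have heq := integral_Iic_add_Ioi (b := (m : ℝ) + 1)
      ((integrable_F hs a).integrableOn) ((integrable_F hs a).integrableOn)
    linarith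
  rw [integral_F hs a] at h3
  linarith

lemma le_tsum' (hs : 0 < s) (ha : 0 ≤ a) :
    Real.sqrt (π * s) ≤ (∑' j : ℕ, rexp (-((j : ℝ) - a) ^ 2 / s)) + 1
      + rexp (-a ^ 2 / (2 * s)) * Real.sqrt (π * (2 * s)) := by
  set m := ⌊a⌋₊ with hm
  have hma : a ≤ (m : ℝ) + 1 := (Nat.lt_floor_add_one a).le
  have hm0 : (m : ℝ) ≤ a := Nat.floor_le ha
  have hsumm := summable_F hs ha
  have h2s : (0 : ℝ) < 2 * s := by linarith
  -- split the integral
  have hsplit1 : (∫ x in Iic (0 : ℝ), rexp (-(x - a) ^ 2 / s))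
      + (∫ x in Ioi (0 : ℝ), rexp (-(x - a) ^ 2 / s))
      = ∫ x : ℝ, rexp (-(x - a) ^ 2 / s) :=
    integral_Iic_add_Ioi ((integrable_F hs a).integrableOn) ((integrable_F hs a).integrableOn)
  have hsplit2 : (∫ x in Ioi (0 : ℝ), rexp (-(x - a) ^ 2 / s))
      = (∫ x in Ioc (0 : ℝ) ((m : ℝ) + 1), rexp (-(x - a) ^ 2 / s))
      + ∫ x in Ioi ((m : ℝ) + 1), rexp (-(x - a) ^ 2 / s) := by
    rw [← setIntegral_union (Set.Ioc_disjoint_Ioi le_rfl) measurableSet_Ioi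
      ((integrable_F hs a).integrableOn) ((integrable_F hs a).integrableOn),
      Set.Ioc_union_Ioi_eq_Ioi (by positivity)]
  -- tail bound
  have hT : (∫ x in Iic (0 : ℝ), rexp (-(x - a) ^ 2 / s))
      ≤ rexp (-a ^ 2 / (2 * s)) * Real.sqrt (π * (2 * s)) := by
    have step1 : (∫ x in Iic (0 : ℝ), rexp (-(x - a) ^ 2 / s))
        ≤ ∫ x in Iic (0 : ℝ), rexp (-a ^ 2 / (2 * s)) * rexp (-(x - a) ^ 2 / (2 * s)) := by
      apply setIntegral_mono_on ((integrable_F hs a).integrableOn)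
        (((integrable_F h2s a).const_mul _).integrableOn) measurableSet_Iic
      intro x hx
      simp only [mem_Iic] at hx
      rw [← Real.exp_add]
      apply Real.exp_le_exp.2
      have hxa : a ^ 2 ≤ (x - a) ^ 2 := by nlinarith
      have key : (-a ^ 2 / (2 * s) + -(x - a) ^ 2 / (2 * s)) - (-(x - a) ^ 2 / s)
          = ((x - a) ^ 2 - a ^ 2) / (2 * s) := by
        field_simp
        ring
      have := div_nonneg (sub_nonneg.2 hxa) h2s.le
      linarith
    have step2 : (∫ x in Iic (0 : ℝ), rexp (-a ^ 2 / (2 * s)) * rexp (-(x - a) ^ 2 / (2 * s)))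
        ≤ rexp (-a ^ 2 / (2 * s)) * Real.sqrt (π * (2 * s)) := by
      rw [MeasureTheory.integral_const_mul]
      have : (∫ x in Iic (0 : ℝ), rexp (-(x - a) ^ 2 / (2 * s)))
          ≤ ∫ x : ℝ, rexp (-(x - a) ^ 2 / (2 * s)) :=
        setIntegral_le_integral (integrable_F h2s a) (ae_of_all _ fun x => F_nonneg _ a x)
      rw [integral_F h2s a] at this
      exact mul_le_mul_of_nonneg_left this (Real.exp_pos _).le
    exact step1.trans step2
  -- middle bound
  have hmid : (∫ x in Ioc (0 : ℝ) ((m : ℝ) + 1), rexp (-(x - a) ^ 2 / s))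
      ≤ (∑ j ∈ Finset.range (m + 1), rexp (-((j : ℝ) - a) ^ 2 / s)) + 1 := by
    rw [← intervalIntegral.integral_of_le (by positivity)]
    have hint1 : IntervalIntegrable (fun x : ℝ => rexp (-(x - a) ^ 2 / s)) volume 0 (m : ℝ) :=
      (integrable_F hs a).intervalIntegrable
    have hint2 : IntervalIntegrable (fun x : ℝ => rexp (-(x - a) ^ 2 / s)) volume (m : ℝ)
        ((m : ℝ) + 1) := (integrable_F hs a).intervalIntegrable
    rw [← intervalIntegral.integral_add_adjacent_intervals hint1 hint2]
    have hmono : MonotoneOn (fun x : ℝ => rexp (-(x - a) ^ 2 / s)) (Icc (0 : ℝ) (0 + (m : ℝ))) :=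
      (mono_F hs a).mono fun x hx => le_trans hx.2 (by simpa using hm0)
    have hA := MonotoneOn.integral_le_sum (x₀ := (0 : ℝ)) (a := m)
      (f := fun x : ℝ => rexp (-(x - a) ^ 2 / s)) hmono
    simp only [zero_add] at hA
    have hB : (∫ x in (m : ℝ)..((m : ℝ) + 1), rexp (-(x - a) ^ 2 / s)) ≤ 1 := by
      have hnorm := intervalIntegral.norm_integral_le_of_norm_le_const (C := 1)
        (f := fun x : ℝ => rexp (-(x - a) ^ 2 / s)) (a := (m : ℝ)) (b := (m : ℝ) + 1)
        (fun x _ => by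
          rw [Real.norm_eq_abs, abs_of_nonneg (F_nonneg s a x)]
          exact F_le_one hs a x)
      have : |(m : ℝ) + 1 - (m : ℝ)| = 1 := by simp
      rw [this, mul_one] at hnorm
      exact (le_abs_self _).trans hnorm
    have hsum : (∑ i ∈ Finset.range m, rexp (-(((i + 1 : ℕ) : ℝ) - a) ^ 2 / s))
        ≤ ∑ j ∈ Finset.range (m + 1), rexp (-((j : ℝ) - a) ^ 2 / s) := by
      rw [Finset.sum_range_succ' (fun j : ℕ => rexp (-((j : ℝ) - a) ^ 2 / s)) m]
      exact le_add_of_nonneg_right (F_nonneg s a _)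
    linarith
  -- tail bound
  have htail : (∫ x in Ioi ((m : ℝ) + 1), rexp (-(x - a) ^ 2 / s))
      ≤ ∑' i : ℕ, rexp (-(((i + (m + 1) : ℕ) : ℝ) - a) ^ 2 / s) := by
    have hb : Tendsto (fun N : ℕ => ((m : ℝ) + 1) + (N : ℝ)) atTop atTop :=
      tendsto_atTop_add_const_left atTop _ tendsto_natCast_atTop_atTop
    have hTend := intervalIntegral_tendsto_integral_Ioi ((m : ℝ) + 1)
      ((integrable_F hs a).integrableOn) hb
    apply le_of_tendsto hTend
    filter_upwards with N
    calc (∫ x in ((m : ℝ) + 1)..(((m : ℝ) + 1) + (N : ℝ)), rexp (-(x - a) ^ 2 / s))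
        ≤ ∑ i ∈ Finset.range N, rexp (-((((m : ℝ) + 1) + (i : ℕ)) - a) ^ 2 / s) :=
          AntitoneOn.integral_le_sum (x₀ := (m : ℝ) + 1) (a := N)
            (f := fun x : ℝ => rexp (-(x - a) ^ 2 / s))
            ((anti_F hs a).mono fun x hx => le_trans hma hx.1)
      _ = ∑ i ∈ Finset.range N, rexp (-(((i + (m + 1) : ℕ) : ℝ) - a) ^ 2 / s) := by
          refine Finset.sum_congr rfl fun i _ => ?_
          congr 2
          push_cast
          ring
      _ ≤ ∑' i : ℕ, rexp (-(((i + (m + 1) : ℕ) : ℝ) - a) ^ 2 / s) := by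
          have hsum2 : Summable (fun i : ℕ => rexp (-(((i + (m + 1) : ℕ) : ℝ) - a) ^ 2 / s)) :=
            (summable_nat_add_iff (f := fun j : ℕ => rexp (-((j : ℝ) - a) ^ 2 / s)) (m + 1)).2
              hsumm
          exact Summable.sum_le_tsum _ (fun i _ => F_nonneg s a _) hsum2
  have hfin := Summable.sum_add_tsum_nat_add (f := fun j : ℕ => rexp (-((j : ℝ) - a) ^ 2 / s))
    (m + 1) hsumm
  have hIF : ∫ x : ℝ, rexp (-(x - a) ^ 2 / s) = Real.sqrt (π * s) := integral_F hs a
  linarith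

end GaussianSumAux

/-- Euler–Maclaurin-type Gaussian sum estimate: if `c > 0` and `j₀(k) ≥ 0` with
`j₀(k)/√k → ∞`, then `Σ_{j=0}^∞ exp(-(j - j₀(k))²/(2ck)) ~ √(2πck)` as `k → ∞`. -/
theorem gaussian_sum_asymptotics (c : ℝ) (hc : 0 < c) (j₀ : ℕ → ℝ)
    (hj₀ : ∀ k, 0 ≤ j₀ k)
    (hgrow : Tendsto (fun k : ℕ => j₀ k / Real.sqrt k) atTop atTop) :
    Tendsto (fun k : ℕ =>
        (∑' j : ℕ, Real.exp (-((j : ℝ) - j₀ k) ^ 2 / (2 * c * k)))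
          / Real.sqrt (2 * Real.pi * c * k))
      atTop (nhds 1) := by
  have hπ := Real.pi_pos
  -- the normalizer tends to infinity
  have hPtop : Tendsto (fun k : ℕ => Real.sqrt (2 * Real.pi * c * k)) atTop atTop := by
    have h1 : Tendsto (fun k : ℕ => 2 * Real.pi * c * (k : ℝ)) atTop atTop :=
      Tendsto.const_mul_atTop (by positivity) tendsto_natCast_atTop_atTop
    have h2 : Tendsto (fun x : ℝ => x ^ (1 / 2 : ℝ)) atTop atTop :=
      tendsto_rpow_atTop (by norm_num)
    have heq : (fun k : ℕ => Real.sqrt (2 * Real.pi * c * k)) =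
        (fun x : ℝ => x ^ (1 / 2 : ℝ)) ∘ fun k : ℕ => 2 * Real.pi * c * (k : ℝ) := by
      funext k
      simp only [Function.comp_apply]
      exact Real.sqrt_eq_rpow _
    rw [heq]
    exact h2.comp h1
  have hinv : Tendsto (fun k : ℕ => 1 / Real.sqrt (2 * Real.pi * c * k)) atTop (nhds 0) := by
    simpa only [one_div, Pi.inv_def] using hPtop.inv_tendsto_atTop
  -- the exponential correction tends to zero
  have hexp : Tendsto (fun k : ℕ => Real.exp (-(j₀ k ^ 2 / (4 * c * k)))) atTop (nhds 0) := by
    have h1 : Tendsto (fun k : ℕ => (j₀ k / Real.sqrt k) ^ 2 / (4 * c)) atTop atTop := by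
      apply Tendsto.atTop_div_const (by positivity)
      have := (tendsto_pow_atTop (two_ne_zero)).comp hgrow
      simpa [Function.comp_def] using this
    have h2 : Tendsto (fun k : ℕ => j₀ k ^ 2 / (4 * c * k)) atTop atTop := by
      apply h1.congr'
      filter_upwards [eventually_ge_atTop 1] with k hk
      have hk0 : (0 : ℝ) < (k : ℝ) := Nat.cast_pos.2 hk
      rw [div_pow, Real.sq_sqrt hk0.le, div_div]
      rw [div_eq_div_iff (by positivity) (by positivity)]
      ring
    have h3 := Real.tendsto_exp_atBot.comp (tendsto_neg_atTop_atBot.comp h2)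
    simpa [Function.comp_def] using h3
  -- squeeze
  have hlow : Tendsto (fun k : ℕ => 1 - 1 / Real.sqrt (2 * Real.pi * c * k)
      - 2 * Real.exp (-(j₀ k ^ 2 / (4 * c * k)))) atTop (nhds 1) := by
    have := (tendsto_const_nhds (α := ℕ) (x := (1 : ℝ))).sub hinv |>.sub (hexp.const_mul 2)
    simpa using this
  have hup : Tendsto (fun k : ℕ => 1 + 2 / Real.sqrt (2 * Real.pi * c * k)) atTop (nhds 1) := by
    have h2 : Tendsto (fun k : ℕ => 2 / Real.sqrt (2 * Real.pi * c * k)) atTop (nhds 0) :=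
      tendsto_const_nhds.div_atTop hPtop
    simpa using (tendsto_const_nhds (α := ℕ) (x := (1 : ℝ))).add h2
  apply tendsto_of_tendsto_of_tendsto_of_le_of_le' hlow hup
  · -- lower bound
    filter_upwards [eventually_ge_atTop 1] with k hk
    have hk0 : (0 : ℝ) < (k : ℝ) := Nat.cast_pos.2 hk
    have hs : (0 : ℝ) < 2 * c * (k : ℝ) := by positivity
    have hP0 : (0 : ℝ) < Real.sqrt (2 * Real.pi * c * k) := Real.sqrt_pos.2 (by positivity)
    set P := Real.sqrt (2 * Real.pi * c * (k : ℝ)) with hPdef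
    set S := ∑' j : ℕ, Real.exp (-((j : ℝ) - j₀ k) ^ 2 / (2 * c * k)) with hSdef
    have hPeq : Real.sqrt (Real.pi * (2 * c * (k : ℝ))) = P := by
      rw [hPdef]; congr 1; ring
    have h2 := GaussianSumAux.le_tsum' hs (hj₀ k)
    rw [hPeq, ← hSdef] at h2
    set E := Real.exp (-(j₀ k ^ 2 / (4 * c * (k : ℝ)))) with hEdef
    have hE : Real.exp (-j₀ k ^ 2 / (2 * (2 * c * (k : ℝ)))) = E := by
      rw [hEdef]
      congr 1
      rw [neg_div, neg_inj, div_eq_div_iff (by positivity) (by positivity)]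
      ring
    rw [hE] at h2
    have hE0 : 0 ≤ E := (Real.exp_pos _).le
    have hsq2 : Real.sqrt (Real.pi * (2 * (2 * c * (k : ℝ)))) ≤ 2 * P := by
      have heq2 : Real.pi * (2 * (2 * c * (k : ℝ))) = 2 * (Real.pi * (2 * c * (k : ℝ))) := by
        ring
      rw [heq2, Real.sqrt_mul (by norm_num : (0 : ℝ) ≤ 2), hPeq]
      have h2le : Real.sqrt 2 ≤ 2 := by
        nlinarith [Real.sq_sqrt (by norm_num : (0 : ℝ) ≤ 2), Real.sqrt_nonneg 2]
      exact mul_le_mul_of_nonneg_right h2le hP0.le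
    have hPS : P ≤ S + 1 + E * (2 * P) :=
      h2.trans (by nlinarith [mul_le_mul_of_nonneg_left hsq2 hE0])
    rw [le_div_iff₀ hP0]
    have hexpand : (1 - 1 / P - 2 * E) * P = P - 1 - 2 * E * P := by
      field_simp
    rw [hexpand]
    nlinarith
  · -- upper bound
    filter_upwards [eventually_ge_atTop 1] with k hk
    have hk0 : (0 : ℝ) < (k : ℝ) := Nat.cast_pos.2 hk
    have hs : (0 : ℝ) < 2 * c * (k : ℝ) := by positivity
    have hP0 : (0 : ℝ) < Real.sqrt (2 * Real.pi * c * k) := Real.sqrt_pos.2 (by positivity)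
    set P := Real.sqrt (2 * Real.pi * c * (k : ℝ)) with hPdef
    set S := ∑' j : ℕ, Real.exp (-((j : ℝ) - j₀ k) ^ 2 / (2 * c * k)) with hSdef
    have hPeq : Real.sqrt (Real.pi * (2 * c * (k : ℝ))) = P := by
      rw [hPdef]; congr 1; ring
    have h1 := GaussianSumAux.tsum_le hs (hj₀ k)
    rw [hPeq, ← hSdef] at h1
    rw [div_le_iff₀ hP0]
    have hexpand : (1 + 2 / P) * P = P + 2 := by
      field_simp
    rw [hexpand]
    exact h1
end

section
/- Let (r_j)_{j≥0} be independent random variables, each uniformly distributed on [−1,1]. For m ≥ 1 set n_m = Σ_{1 ≤ j ≤ m, j ≡ m (mod 2)} r_j 2^j C((m+j)/2 − 1, (m−j)/2), the m-th Taylor coefficient of the composition of the random series Σ_j r_j ω^j with the two-cut conformal map φ₂(z) = 2z/(1 − z²). Then almost surely limsup_{m→∞} |n_m|^{1/m} = 1 + √2. -/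
open MeasureTheory ProbabilityTheory Filter

open scoped ENNReal
private def pell : ℕ → ℕ
  | 0 => 0
  | 1 => 1
  | (n+2) => 2 * pell (n+1) + pell n

private def Tf (m : ℕ) : ℕ :=
  ∑ l ∈ Finset.range ((m+1)/2), 2^(m-2*l) * Nat.choose (m-1-l) l

private lemma Tf_rec (m : ℕ) : Tf (m+2) = 2 * Tf (m+1) + Tf m := by
  have h1 : (m+3)/2 = (m+1)/2 + 1 := by omega
  have h2 : (m+2)/2 = m/2 + 1 := by omega
  have peel : Tf (m+2)
      = (∑ l ∈ Finset.range ((m+1)/2), 2^(m-2*l) * Nat.choose (m-1-l) (l+1))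
        + Tf m + 2^(m+2) := by
    rw [Tf, show m+2+1 = m+3 from rfl, h1, Finset.sum_range_succ']
    have hterm : ∀ l ∈ Finset.range ((m+1)/2),
        2^(m+2-2*(l+1)) * Nat.choose (m+2-1-(l+1)) (l+1)
          = 2^(m-2*l) * Nat.choose (m-1-l) (l+1) + 2^(m-2*l) * Nat.choose (m-1-l) l := by
      intro l hl
      rw [Finset.mem_range] at hl
      have e1 : m+2-2*(l+1) = m - 2*l := by omega
      have e2 : m+2-1-(l+1) = (m-1-l) + 1 := by omega
      rw [e1, e2, Nat.choose_succ_succ]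
      ring
    rw [Finset.sum_congr rfl hterm, Finset.sum_add_distrib]
    have h0 : (2:ℕ)^(m+2-2*0) * Nat.choose (m+2-1-0) 0 = 2^(m+2) := by simp
    rw [h0, Tf]
  have peel2 : 2 * Tf (m+1)
      = (∑ l ∈ Finset.range (m/2), 2^(m-2*l) * Nat.choose (m-1-l) (l+1)) + 2^(m+2) := by
    rw [Tf, h2, Finset.sum_range_succ', Nat.mul_add, Finset.mul_sum]
    congr 1
    · refine Finset.sum_congr rfl fun l hl => ?_
      rw [Finset.mem_range] at hl
      obtain ⟨k, hk⟩ : ∃ k, m - 2*l = k+1 := ⟨m-2*l-1, by omega⟩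
      have e1 : m+1-2*(l+1) = k := by omega
      have e2 : m+1-1-(l+1) = m-1-l := by omega
      rw [e1, e2, hk, pow_succ]
      ring
    · simp [pow_succ]
      ring
  have hrange : ∑ l ∈ Finset.range ((m+1)/2), 2^(m-2*l) * Nat.choose (m-1-l) (l+1)
      = ∑ l ∈ Finset.range (m/2), 2^(m-2*l) * Nat.choose (m-1-l) (l+1) := by
    rcases Nat.even_or_odd m with ⟨t, ht⟩ | ⟨t, ht⟩
    · have : (m+1)/2 = m/2 := by omega
      rw [this]
    · have h3 : (m+1)/2 = m/2 + 1 := by omega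
      rw [h3, Finset.sum_range_succ]
      have hc : Nat.choose (m-1-(m/2)) (m/2+1) = 0 := by
        apply Nat.choose_eq_zero_of_lt; omega
      rw [hc]; simp
  omega

private lemma Tf_eq_pell : ∀ m, Tf m = 2 * pell m := by
  have H : ∀ m, Tf m = 2 * pell m ∧ Tf (m+1) = 2 * pell (m+1) := by
    intro m
    induction m with
    | zero => exact ⟨by simp [Tf, pell], by simp [Tf, pell]⟩
    | succ n ih =>
      refine ⟨ih.2, ?_⟩
      rw [Tf_rec, ih.1, ih.2, show pell (n+2) = 2 * pell (n+1) + pell n from rfl]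
      ring
  exact fun m => (H m).1

private lemma sum_cf_eq (m : ℕ) :
    ∑ j ∈ (Finset.Icc 1 m).filter (fun j => j % 2 = m % 2),
      (2^j * Nat.choose ((m+j)/2 - 1) ((m-j)/2)) = 2 * pell m := by
  rw [← Tf_eq_pell, Tf]
  refine Finset.sum_bij' (fun j _ => (m - j)/2) (fun l _ => m - 2*l) ?_ ?_ ?_ ?_ ?_
  · intro j hj
    simp only [Finset.mem_filter, Finset.mem_Icc] at hj
    rw [Finset.mem_range]; omega
  · intro l hl
    rw [Finset.mem_range] at hl
    simp only [Finset.mem_filter, Finset.mem_Icc]; omega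
  · intro j hj
    simp only [Finset.mem_filter, Finset.mem_Icc] at hj
    omega
  · intro l hl
    rw [Finset.mem_range] at hl
    omega
  · intro j hj
    simp only [Finset.mem_filter, Finset.mem_Icc] at hj
    have e1 : m - 2*((m-j)/2) = j := by omega
    have e2 : m - 1 - (m-j)/2 = (m+j)/2 - 1 := by omega
    rw [e1, e2]

private lemma s2sq : Real.sqrt 2 ^ 2 = 2 := Real.sq_sqrt (by norm_num)
private lemma s2gt1 : 1 < Real.sqrt 2 := by
  nlinarith [s2sq, Real.sqrt_nonneg 2]
private lemma s2lt32 : Real.sqrt 2 < 3/2 := by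
  nlinarith [s2sq, Real.sqrt_nonneg 2]

private lemma pell_real : ∀ m : ℕ,
    2 * Real.sqrt 2 * pell m = (1 + Real.sqrt 2)^m - (1 - Real.sqrt 2)^m := by
  have key : ∀ x : ℝ, x^2 = 2*x + 1 → ∀ n : ℕ, x^(n+2) = 2*x^(n+1) + x^n := by
    intro x hx n
    have h1 : x^(n+2) = x^n * x^2 := by ring
    rw [h1, hx]; ring
  have k1 : ∀ n : ℕ, (1 + Real.sqrt 2)^(n+2) = 2*(1 + Real.sqrt 2)^(n+1) + (1 + Real.sqrt 2)^n :=
    key _ (by linear_combination s2sq)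
  have k2 : ∀ n : ℕ, (1 - Real.sqrt 2)^(n+2) = 2*(1 - Real.sqrt 2)^(n+1) + (1 - Real.sqrt 2)^n :=
    key _ (by linear_combination s2sq)
  have H : ∀ m : ℕ,
      2 * Real.sqrt 2 * pell m = (1 + Real.sqrt 2)^m - (1 - Real.sqrt 2)^m ∧
      2 * Real.sqrt 2 * pell (m+1) = (1 + Real.sqrt 2)^(m+1) - (1 - Real.sqrt 2)^(m+1) := by
    intro m
    induction m with
    | zero => constructor <;> simp [pell] <;> ring
    | succ n ih =>
      refine ⟨ih.2, ?_⟩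
      have hp : (pell (n+2) : ℝ) = 2 * pell (n+1) + pell n := by
        rw [show pell (n+2) = 2 * pell (n+1) + pell n from rfl]; push_cast; ring
      rw [hp, k1 n, k2 n]
      nlinarith [ih.1, ih.2]
  exact fun m => (H m).1

private lemma abs_one_sub_s2_pow (m : ℕ) : |(1 - Real.sqrt 2)^m| ≤ 1 := by
  rw [abs_pow]
  apply pow_le_one₀ (abs_nonneg _)
  rw [abs_le]; constructor <;> nlinarith [s2gt1, s2lt32]

private lemma pell_le (m : ℕ) : (2 * pell m : ℝ) ≤ 2 * (1 + Real.sqrt 2)^m := by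
  have h1 := pell_real m
  have h2 := abs_one_sub_s2_pow m
  have h3 : (1:ℝ) ≤ (1 + Real.sqrt 2)^m := one_le_pow₀ (by nlinarith [s2gt1])
  have h4 : (0:ℝ) ≤ pell m := Nat.cast_nonneg _
  have : 2 * Real.sqrt 2 * pell m ≤ (1 + Real.sqrt 2)^m + 1 := by
    rw [h1]; cases abs_le.mp h2; linarith
  nlinarith [s2gt1]

private lemma pell_ge (m : ℕ) : (1 + Real.sqrt 2)^m - 1 ≤ 3 * pell m := by
  have h1 := pell_real m
  have h2 := abs_one_sub_s2_pow m
  have h4 : (0:ℝ) ≤ pell m := Nat.cast_nonneg _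
  have : (1 + Real.sqrt 2)^m - 1 ≤ 2 * Real.sqrt 2 * pell m := by
    rw [h1]; cases abs_le.mp h2; linarith
  nlinarith [s2lt32]

private lemma rpow_pow_inv {x : ℝ} (hx : 0 ≤ x) {m : ℕ} (hm : 1 ≤ m) :
    ((x^m : ℝ)) ^ ((m:ℝ)⁻¹) = x := by
  rw [← Real.rpow_natCast x m, ← Real.rpow_mul hx,
    mul_inv_cancel₀ (by exact_mod_cast Nat.one_le_iff_ne_zero.mp hm), Real.rpow_one]

private lemma ev_pow_le {K q c2 c1 : ℝ} (hK : 0 ≤ K) (hq : 0 ≤ q) (h1 : q < c1)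
    (hc2 : 0 ≤ c2) (h2 : c2 < c1) :
    ∀ᶠ m : ℕ in atTop, c2^m + K * q^m ≤ c1^m := by
  have hc1 : 0 < c1 := lt_of_le_of_lt hc2 h2
  have t1 : Tendsto (fun m : ℕ => (c2/c1)^m + K*(q/c1)^m) atTop (nhds (0 + K*0)) := by
    exact ((tendsto_pow_atTop_nhds_zero_of_lt_one (by positivity)
      ((div_lt_one hc1).2 h2)).add
      ((tendsto_pow_atTop_nhds_zero_of_lt_one (by positivity)
        ((div_lt_one hc1).2 h1)).const_mul K))
  norm_num at t1
  filter_upwards [t1.eventually_lt_const (by norm_num : (0:ℝ) < 1)] with m hm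
  have hpos : (0:ℝ) < c1^m := by positivity
  have hexp : c2^m + K*q^m = ((c2/c1)^m + K*(q/c1)^m) * c1^m := by
    rw [div_pow, div_pow, add_mul, mul_assoc K, div_mul_cancel₀ _ hpos.ne', div_mul_cancel₀ _ hpos.ne']
  rw [hexp]
  nlinarith [hm, hpos]

private lemma ev_lin {c : ℝ} (hc : 2 < c) (hcφ : c < 1 + Real.sqrt 2) :
    ∀ᶠ m : ℕ in atTop, 4*(m:ℝ)*c^m + 1 ≤ (1 + Real.sqrt 2)^m := by
  set d := (c + (1 + Real.sqrt 2))/2 with hd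
  have hcd : c < d := by rw [hd]; linarith
  have hdφ : d < 1 + Real.sqrt 2 := by rw [hd]; linarith
  have hdpos : (0:ℝ) < d := by linarith
  have hsum : Summable (fun m : ℕ => (m:ℝ)^1 * (c/d)^m) :=
    summable_pow_mul_geometric_of_norm_lt_one 1
      (by rw [Real.norm_eq_abs, abs_of_nonneg (by positivity)]
          exact (div_lt_one hdpos).2 hcd)
  have t1 : Tendsto (fun m : ℕ => (m:ℝ)^1 * (c/d)^m) atTop (nhds 0) :=
    hsum.tendsto_atTop_zero
  have e1 : ∀ᶠ m : ℕ in atTop, 4*(m:ℝ)*c^m ≤ d^m := by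
    filter_upwards [t1.eventually_lt_const (by norm_num : (0:ℝ) < 1/4)] with m hm
    have hpos : (0:ℝ) < d^m := by positivity
    have : (m:ℝ)^1 * (c/d)^m * d^m < (1/4) * d^m := by nlinarith
    rw [pow_one] at this
    have hdiv : (c/d)^m * d^m = c^m := by
      rw [div_pow]; field_simp
    nlinarith [this, hdiv]
  have e2 : ∀ᶠ m : ℕ in atTop, d^m + 1*(1:ℝ)^m ≤ (1 + Real.sqrt 2)^m :=
    ev_pow_le (by norm_num) (by norm_num) (by nlinarith [s2gt1]) hdpos.le hdφ
  filter_upwards [e1, e2] with m h1 h2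
  simp only [one_pow, one_mul] at h2
  linarith

private lemma le_limsup_aux {a : ℕ → ℝ}
    (hbdd : ∀ m : ℕ, 1 ≤ m → |a m| ≤ 2 * (1 + Real.sqrt 2)^m)
    (h : ∀ c : ℝ, 2 < c → c < 1 + Real.sqrt 2 → ∃ᶠ m : ℕ in atTop, c^m ≤ |a m|) :
    1 + Real.sqrt 2 ≤ limsup (fun m : ℕ => |a m| ^ ((m:ℝ)⁻¹)) atTop := by
  have hφpos : (0:ℝ) < 1 + Real.sqrt 2 := by nlinarith [s2gt1]
  have hbound : IsBoundedUnder (· ≤ ·) atTop (fun m : ℕ => |a m| ^ ((m:ℝ)⁻¹)) := by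
    refine isBoundedUnder_of_eventually_le (a := 2 * (1 + Real.sqrt 2)) ?_
    filter_upwards [eventually_ge_atTop 1] with m hm
    calc |a m| ^ ((m:ℝ)⁻¹) ≤ ((2 * (1 + Real.sqrt 2))^m) ^ ((m:ℝ)⁻¹) := by
          apply Real.rpow_le_rpow (abs_nonneg _) _ (by positivity)
          refine (hbdd m hm).trans ?_
          rw [mul_pow]
          have h2m : (2:ℝ) ≤ 2^m := by
            calc (2:ℝ) = 2^1 := (pow_one 2).symm
            _ ≤ 2^m := pow_le_pow_right₀ one_le_two hm
          nlinarith [pow_pos hφpos m]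
      _ = 2 * (1 + Real.sqrt 2) := rpow_pow_inv (by positivity) hm
  by_contra hlt
  push_neg at hlt
  set L := limsup (fun m : ℕ => |a m| ^ ((m:ℝ)⁻¹)) atTop with hL
  set c := max ((L + (1 + Real.sqrt 2))/2) ((2 + (1 + Real.sqrt 2))/2) with hc
  have hc2 : 2 < c := lt_of_lt_of_le (by nlinarith [s2gt1]) (le_max_right _ _)
  have hcφ : c < 1 + Real.sqrt 2 := max_lt (by linarith) (by nlinarith [s2gt1])
  have hcL : L < c := lt_of_lt_of_le (by linarith) (le_max_left _ _)
  have hfin : c ≤ L := by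
    apply le_limsup_of_frequently_le ?_ hbound
    have hfe : ∃ᶠ m : ℕ in atTop, c^m ≤ |a m| ∧ 1 ≤ m :=
      (h c hc2 hcφ).and_eventually (eventually_ge_atTop 1)
    refine hfe.mono fun m hm => ?_
    obtain ⟨hmle, hm1⟩ := hm
    calc c = ((c^m : ℝ))^((m:ℝ)⁻¹) := (rpow_pow_inv (by linarith) hm1).symm
    _ ≤ |a m| ^ ((m:ℝ)⁻¹) := Real.rpow_le_rpow (by positivity) hmle (by positivity)
  linarith

private lemma freq_of_le_limsup {a : ℕ → ℝ}
    (h : 1 + Real.sqrt 2 ≤ limsup (fun m : ℕ => |a m| ^ ((m:ℝ)⁻¹)) atTop) :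
    ∀ c : ℝ, 0 < c → c < 1 + Real.sqrt 2 → ∃ᶠ m : ℕ in atTop, c^m ≤ |a m| := by
  intro c hc hcφ
  have hcob : IsCoboundedUnder (· ≤ ·) atTop (fun m : ℕ => |a m| ^ ((m:ℝ)⁻¹)) :=
    isCoboundedUnder_le_of_le atTop (x := 0) (fun m => by positivity)
  have hfreq : ∃ᶠ m : ℕ in atTop, c < |a m| ^ ((m:ℝ)⁻¹) :=
    frequently_lt_of_lt_limsup hcob (lt_of_lt_of_le hcφ h)
  have hfe := hfreq.and_eventually (eventually_ge_atTop 1)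
  refine hfe.mono fun m hm => ?_
  obtain ⟨hmlt, hm1⟩ := hm
  by_contra hcon
  push_neg at hcon
  have : |a m| ^ ((m:ℝ)⁻¹) ≤ c := by
    calc |a m| ^ ((m:ℝ)⁻¹) ≤ ((c^m : ℝ))^((m:ℝ)⁻¹) :=
          Real.rpow_le_rpow (abs_nonneg _) hcon.le (by positivity)
    _ = c := rpow_pow_inv hc.le hm1
  linarith

private lemma limsup_transfer {a b : ℕ → ℝ} {K : ℝ} (hK : 0 ≤ K)
    (hdiff : ∀ m : ℕ, |a m - b m| ≤ K * Real.sqrt 2 ^ m)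
    (H : ∀ c : ℝ, 2 < c → c < 1 + Real.sqrt 2 → ∃ᶠ m : ℕ in atTop, c^m ≤ |a m|) :
    ∀ c : ℝ, 2 < c → c < 1 + Real.sqrt 2 → ∃ᶠ m : ℕ in atTop, c^m ≤ |b m| := by
  intro c hc hcφ
  set c' := (c + (1 + Real.sqrt 2))/2 with hc'
  have h1 : c < c' := by rw [hc']; linarith
  have h2 : c' < 1 + Real.sqrt 2 := by rw [hc']; linarith
  have hev : ∀ᶠ m : ℕ in atTop, c^m + K * Real.sqrt 2 ^ m ≤ c'^m :=
    ev_pow_le hK (Real.sqrt_nonneg 2) (by nlinarith [s2lt32]) (by linarith) h1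
  have hfe := (H c' (by linarith) h2).and_eventually hev
  refine hfe.mono fun m hm => ?_
  obtain ⟨hmle, hmev⟩ := hm
  have := hdiff m
  have h3 : |b m| ≥ |a m| - |a m - b m| := by
    have := abs_sub_abs_le_abs_sub (a m) (b m); linarith
  linarith

private lemma limsup_le_aux {a : ℕ → ℝ}
    (hbdd : ∀ m : ℕ, 1 ≤ m → |a m| ≤ 2 * (1 + Real.sqrt 2)^m) :
    limsup (fun m : ℕ => |a m| ^ ((m:ℝ)⁻¹)) atTop ≤ 1 + Real.sqrt 2 := by
  have hφpos : (0:ℝ) < 1 + Real.sqrt 2 := by nlinarith [s2gt1]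
  have hg : Tendsto (fun m : ℕ => (2:ℝ) ^ ((m:ℝ)⁻¹) * (1 + Real.sqrt 2)) atTop
      (nhds (1 * (1 + Real.sqrt 2))) := by
    apply Tendsto.mul_const
    have hcont : ContinuousAt (fun x : ℝ => (2:ℝ) ^ x) 0 :=
      Real.continuousAt_const_rpow (by norm_num)
    have := hcont.tendsto.comp tendsto_inv_atTop_nhds_zero_nat
    simpa [Real.rpow_zero, Function.comp_def] using this
  rw [one_mul] at hg
  have hle : ∀ᶠ m : ℕ in atTop,
      |a m| ^ ((m:ℝ)⁻¹) ≤ (2:ℝ) ^ ((m:ℝ)⁻¹) * (1 + Real.sqrt 2) := by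
    filter_upwards [eventually_ge_atTop 1] with m hm
    have hmR : (0:ℝ) < m := by exact_mod_cast hm
    calc |a m| ^ ((m:ℝ)⁻¹) ≤ (2 * (1 + Real.sqrt 2)^m) ^ ((m:ℝ)⁻¹) :=
          Real.rpow_le_rpow (abs_nonneg _) (hbdd m hm) (by positivity)
    _ = (2:ℝ) ^ ((m:ℝ)⁻¹) * ((1 + Real.sqrt 2)^m) ^ ((m:ℝ)⁻¹) :=
          Real.mul_rpow (by norm_num) (by positivity)
    _ = (2:ℝ) ^ ((m:ℝ)⁻¹) * (1 + Real.sqrt 2) := by rw [rpow_pow_inv hφpos.le hm]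
  calc limsup (fun m : ℕ => |a m| ^ ((m:ℝ)⁻¹)) atTop
      ≤ limsup (fun m : ℕ => (2:ℝ) ^ ((m:ℝ)⁻¹) * (1 + Real.sqrt 2)) atTop := by
        exact limsup_le_limsup hle
          (isCoboundedUnder_le_of_le atTop (x := 0) (fun m => by positivity))
          hg.isBoundedUnder_le
  _ = 1 + Real.sqrt 2 := hg.limsup_eq

private lemma choose_le_two_pow (a b : ℕ) : Nat.choose a b ≤ 2^a := by
  rcases le_or_gt b a with h | h
  · calc Nat.choose a b ≤ ∑ i ∈ Finset.range (a+1), Nat.choose a i :=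
        Finset.single_le_sum (fun i _ => Nat.zero_le _) (Finset.mem_range.mpr (by omega))
    _ = 2^a := Nat.sum_range_choose a
  · rw [Nat.choose_eq_zero_of_lt h]; exact Nat.zero_le _

private lemma pow_half_le_sqrt_pow (m : ℕ) : ((2:ℝ))^(m/2) ≤ Real.sqrt 2 ^ m := by
  have h1 : ((2:ℝ))^(m/2) = (Real.sqrt 2)^(2*(m/2)) := by
    rw [pow_mul, Real.sq_sqrt (by norm_num : (0:ℝ) ≤ 2)]
  rw [h1]
  exact pow_le_pow_right₀ (by nlinarith [Real.sq_sqrt (by norm_num : (0:ℝ) ≤ 2), Real.sqrt_nonneg 2]) (by omega)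

private lemma anticoncentration {Ω : Type*} [MeasureSpace Ω]
    [IsProbabilityMeasure (ℙ : Measure Ω)]
    (X Y : Ω → ℝ) (hX : Measurable X) (hY : Measurable Y)
    (hXY : IndepFun X Y ℙ)
    (hmap : Measure.map Y ℙ
      = (volume (Set.Icc (-1:ℝ) 1))⁻¹ • volume.restrict (Set.Icc (-1:ℝ) 1))
    {c : ℝ} (hc : 0 < c) :
    ℙ {ω | |X ω + Y ω * c| < c/2} ≤ 2⁻¹ := by
  set T : Set (ℝ × ℝ) := {p : ℝ × ℝ | |p.1 + p.2 * c| < c/2} with hT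
  have hTmeas : MeasurableSet T := by
    have : Measurable fun p : ℝ × ℝ => |p.1 + p.2 * c| :=
      (measurable_fst.add (measurable_snd.mul_const c)).abs
    exact measurableSet_lt this measurable_const
  have hpre : {ω | |X ω + Y ω * c| < c/2} = (fun ω => (X ω, Y ω)) ⁻¹' T := rfl
  rw [hpre, ← Measure.map_apply (hX.prodMk hY) hTmeas,
    (indepFun_iff_map_prod_eq_prod_map_map hX.aemeasurable hY.aemeasurable).mp hXY,
    Measure.prod_apply hTmeas]
  have hinner : ∀ x : ℝ, (Measure.map Y ℙ) (Prod.mk x ⁻¹' T) ≤ 2⁻¹ := by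
    intro x
    have hset : Prod.mk x ⁻¹' T = Set.Ioo ((-x - c/2)/c) ((-x + c/2)/c) := by
      ext y
      simp only [hT, Set.mem_preimage, Set.mem_setOf_eq, Set.mem_Ioo, abs_lt]
      constructor
      · rintro ⟨h1, h2⟩
        constructor
        · rw [div_lt_iff₀ hc]; linarith
        · rw [lt_div_iff₀ hc]; linarith
      · rintro ⟨h1, h2⟩
        rw [div_lt_iff₀ hc] at h1
        rw [lt_div_iff₀ hc] at h2
        constructor <;> linarith
    rw [hmap, hset]
    simp only [Measure.smul_apply, smul_eq_mul]
    have h2 : volume (Set.Ioo ((-x - c/2)/c) ((-x + c/2)/c)) = 1 := by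
      rw [Real.volume_Ioo]
      have : (-x + c/2)/c - (-x - c/2)/c = 1 := by field_simp; ring
      rw [this, ENNReal.ofReal_one]
    have h1 : volume.restrict (Set.Icc (-1:ℝ) 1) (Set.Ioo ((-x - c/2)/c) ((-x + c/2)/c))
        ≤ 1 := by
      calc volume.restrict (Set.Icc (-1:ℝ) 1) (Set.Ioo ((-x - c/2)/c) ((-x + c/2)/c))
          ≤ volume (Set.Ioo ((-x - c/2)/c) ((-x + c/2)/c)) := Measure.restrict_le_self _
      _ = 1 := h2
    have hIcc : volume (Set.Icc (-1:ℝ) 1) = 2 := by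
      rw [Real.volume_Icc, show (1:ℝ) - (-1) = 2 by norm_num]
      exact ENNReal.ofReal_ofNat 2
    rw [hIcc]
    calc (2:ℝ≥0∞)⁻¹ * volume.restrict (Set.Icc (-1:ℝ) 1) (Set.Ioo ((-x - c/2)/c) ((-x + c/2)/c))
        ≤ 2⁻¹ * 1 := by exact mul_le_mul_right h1 _
    _ = 2⁻¹ := mul_one _
  have : IsProbabilityMeasure (Measure.map X ℙ) := Measure.isProbabilityMeasure_map hX.aemeasurable
  calc ∫⁻ x, (Measure.map Y ℙ) (Prod.mk x ⁻¹' T) ∂(Measure.map X ℙ)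
      ≤ ∫⁻ _, 2⁻¹ ∂(Measure.map X ℙ) := lintegral_mono hinner
  _ = 2⁻¹ := by rw [lintegral_const, measure_univ, mul_one]

private lemma cf_le_aux {m j n : ℕ} (hj : j < n) :
    2^j * Nat.choose ((m+j)/2 - 1) ((m-j)/2) ≤ 2^(2*n+1) * 2^(m/2) := by
  calc 2^j * Nat.choose ((m+j)/2 - 1) ((m-j)/2)
      ≤ 2^j * 2^((m+j)/2 - 1) := Nat.mul_le_mul_left _ (choose_le_two_pow _ _)
  _ = 2^(j + ((m+j)/2 - 1)) := (pow_add 2 _ _).symm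
  _ ≤ 2^(2*n+1 + m/2) := Nat.pow_le_pow_right (by norm_num) (by omega)
  _ = 2^(2*n+1) * 2^(m/2) := pow_add 2 _ _

/-- For independent `r_j` uniform on `[-1,1]`, the Taylor coefficients
`n_m = Σ_{1 ≤ j ≤ m, j ≡ m (mod 2)} r_j 2^j C((m+j)/2 - 1, (m-j)/2)` of the composition
of the random series with the two-cut conformal map `φ₂(z) = 2z/(1-z²)` satisfy,
almost surely, `limsup_m |n_m|^{1/m} = 1 + √2`. -/
theorem twoCut_noise_coeff_growth {Ω : Type*} [MeasureSpace Ω]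
    [IsProbabilityMeasure (ℙ : Measure Ω)]
    (r : ℕ → Ω → ℝ) (hmeas : ∀ j, Measurable (r j))
    (hindep : iIndepFun r ℙ)
    (hunif : ∀ j, pdf.IsUniform (r j) (Set.Icc (-1 : ℝ) 1) ℙ) :
    ∀ᵐ ω ∂ℙ, limsup (fun m : ℕ =>
        |∑ j ∈ (Finset.Icc 1 m).filter (fun j => j % 2 = m % 2),
            r j ω * 2 ^ j * (((m + j) / 2 - 1).choose ((m - j) / 2) : ℝ)|
          ^ ((m : ℝ)⁻¹)) atTop
      = 1 + Real.sqrt 2 := by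
  classical
  have hφpos : (0:ℝ) < 1 + Real.sqrt 2 := by nlinarith [s2gt1]
  have hφ1 : (1:ℝ) < 1 + Real.sqrt 2 := by nlinarith [s2gt1]
  -- clamping
  set cl : ℝ → ℝ := fun x => max (-1) (min 1 x) with hcl
  have cl_meas : Measurable cl := measurable_const.max (measurable_const.min measurable_id)
  have cl_abs : ∀ x, |cl x| ≤ 1 := by
    intro x
    rw [abs_le]
    exact ⟨le_max_left _ _, max_le (by norm_num) (min_le_left _ _)⟩
  have cl_eq : ∀ x : ℝ, -1 ≤ x → x ≤ 1 → cl x = x := by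
    intro x h1 h2
    rw [hcl]
    simp only []
    rw [min_eq_right h2, max_eq_right h1]
  set r' : ℕ → Ω → ℝ := fun j ω => cl (r j ω) with hr'
  have r'_meas : ∀ j, Measurable (r' j) := fun j => cl_meas.comp (hmeas j)
  -- distribution facts
  have hmapr : ∀ j, Measure.map (r j) ℙ
      = (volume (Set.Icc (-1:ℝ) 1))⁻¹ • volume.restrict (Set.Icc (-1:ℝ) 1) := fun j => hunif j
  have hIccae : ∀ j, ∀ᵐ ω ∂ℙ, r j ω ∈ Set.Icc (-1:ℝ) 1 := by
    intro j
    have h0 : ℙ ((r j) ⁻¹' (Set.Icc (-1:ℝ) 1)ᶜ) = 0 := by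
      rw [← Measure.map_apply (hmeas j) measurableSet_Icc.compl, hmapr j]
      simp [Measure.restrict_apply measurableSet_Icc.compl]
    rw [ae_iff]
    exact h0
  have hae : ∀ j, r' j =ᵐ[ℙ] r j := fun j => (hIccae j).mono fun ω h => cl_eq _ h.1 h.2
  have hmapr' : ∀ j, Measure.map (r' j) ℙ
      = (volume (Set.Icc (-1:ℝ) 1))⁻¹ • volume.restrict (Set.Icc (-1:ℝ) 1) :=
    fun j => (Measure.map_congr (hae j)).trans (hmapr j)
  -- notation
  set F : ℕ → Finset ℕ := fun m => (Finset.Icc 1 m).filter (fun j => j % 2 = m % 2) with hF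
  set cf : ℕ → ℕ → ℕ := fun m j => 2^j * Nat.choose ((m+j)/2 - 1) ((m-j)/2) with hcf
  set nn : ℕ → ℕ → Ω → ℝ :=
    fun n m ω => ∑ j ∈ (F m).filter (fun j => n ≤ j), r' j ω * cf m j with hnn
  have hnn0 : ∀ m ω, nn 0 m ω = ∑ j ∈ F m, r' j ω * cf m j := by
    intro m ω
    rw [hnn]
    simp only []
    congr 1
    exact Finset.filter_true_of_mem (fun j _ => Nat.zero_le j)
  have hsumcf : ∀ m, ∑ j ∈ F m, (cf m j : ℝ) = 2 * pell m := by
    intro m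
    rw [← Nat.cast_sum]
    exact_mod_cast congrArg (Nat.cast : ℕ → ℝ) (sum_cf_eq m)
  have hnn_le : ∀ n m ω, |nn n m ω| ≤ 2 * (1 + Real.sqrt 2)^m := by
    intro n m ω
    calc |nn n m ω| ≤ ∑ j ∈ (F m).filter (fun j => n ≤ j), |r' j ω * cf m j| :=
          Finset.abs_sum_le_sum_abs _ _
    _ ≤ ∑ j ∈ (F m).filter (fun j => n ≤ j), (cf m j : ℝ) := by
          refine Finset.sum_le_sum fun j _ => ?_
          rw [abs_mul, abs_of_nonneg (by positivity : (0:ℝ) ≤ (cf m j : ℝ))]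
          exact mul_le_of_le_one_left (by positivity) (cl_abs _)
    _ ≤ ∑ j ∈ F m, (cf m j : ℝ) :=
          Finset.sum_le_sum_of_subset_of_nonneg (Finset.filter_subset _ _)
            (fun j _ _ => by positivity)
    _ = 2 * pell m := hsumcf m
    _ ≤ 2 * (1 + Real.sqrt 2)^m := pell_le m
  have hdiff : ∀ n m ω,
      |nn 0 m ω - nn n m ω| ≤ ((n:ℝ) * 2^(2*n+1)) * Real.sqrt 2 ^ m := by
    intro n m ω
    have hsplit : nn 0 m ω - nn n m ω
        = ∑ j ∈ (F m).filter (fun j => ¬ n ≤ j), r' j ω * cf m j := by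
      have hs := Finset.sum_filter_add_sum_filter_not (F m) (fun j => n ≤ j)
        (fun j => r' j ω * (cf m j : ℝ))
      rw [hnn0, hnn]
      simp only []
      linarith
    rw [hsplit]
    have hbound : ∀ j ∈ (F m).filter (fun j => ¬ n ≤ j),
        |r' j ω * cf m j| ≤ (2:ℝ)^(2*n+1) * Real.sqrt 2 ^ m := by
      intro j hj
      rw [Finset.mem_filter] at hj
      have hjn : j < n := by omega
      rw [abs_mul, abs_of_nonneg (by positivity : (0:ℝ) ≤ (cf m j : ℝ))]
      have h1 : (cf m j : ℝ) ≤ (2:ℝ)^(2*n+1) * 2^(m/2) := by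
        rw [hcf]
        exact_mod_cast cf_le_aux hjn
      have h2 : ((2:ℝ))^(m/2) ≤ Real.sqrt 2 ^ m := pow_half_le_sqrt_pow m
      calc |r' j ω| * (cf m j : ℝ) ≤ 1 * (cf m j : ℝ) :=
            mul_le_mul_of_nonneg_right (cl_abs _) (by positivity)
      _ = (cf m j : ℝ) := one_mul _
      _ ≤ (2:ℝ)^(2*n+1) * 2^(m/2) := h1
      _ ≤ (2:ℝ)^(2*n+1) * Real.sqrt 2 ^ m :=
            mul_le_mul_of_nonneg_left h2 (by positivity)
    have hcard : ((F m).filter (fun j => ¬ n ≤ j)).card ≤ n := by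
      have hsub : (F m).filter (fun j => ¬ n ≤ j) ⊆ Finset.range n := by
        intro j hj
        rw [Finset.mem_filter] at hj
        rw [Finset.mem_range]
        omega
      calc ((F m).filter (fun j => ¬ n ≤ j)).card ≤ (Finset.range n).card :=
            Finset.card_le_card hsub
      _ = n := Finset.card_range n
    calc |∑ j ∈ (F m).filter (fun j => ¬ n ≤ j), r' j ω * cf m j|
        ≤ ∑ j ∈ (F m).filter (fun j => ¬ n ≤ j), |r' j ω * cf m j| :=
          Finset.abs_sum_le_sum_abs _ _
    _ ≤ ∑ _j ∈ (F m).filter (fun j => ¬ n ≤ j), (2:ℝ)^(2*n+1) * Real.sqrt 2 ^ m :=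
          Finset.sum_le_sum hbound
    _ = ((F m).filter (fun j => ¬ n ≤ j)).card * ((2:ℝ)^(2*n+1) * Real.sqrt 2 ^ m) := by
          rw [Finset.sum_const, nsmul_eq_mul]
    _ ≤ (n:ℝ) * ((2:ℝ)^(2*n+1) * Real.sqrt 2 ^ m) := by
          apply mul_le_mul_of_nonneg_right _ (by positivity)
          exact_mod_cast hcard
    _ = ((n:ℝ) * 2^(2*n+1)) * Real.sqrt 2 ^ m := by ring
  -- events and measurability
  have hnnmeas : ∀ n m, Measurable (nn n m) :=
    fun n m => Finset.measurable_sum _ (fun j _ => (r'_meas j).mul_const _)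
  set A : ℕ → Set Ω :=
    fun m => {ω | (1 + Real.sqrt 2)^m - 1 ≤ 4*(m:ℝ)*|nn 0 m ω|} with hA
  have hAmeas : ∀ m, MeasurableSet (A m) :=
    fun m => measurableSet_le measurable_const (measurable_const.mul (hnnmeas 0 m).abs)
  have hPA : ∀ m : ℕ, 1 ≤ m → 2⁻¹ ≤ ℙ (A m) := by
    intro m hm
    have hmem : m ∈ F m := by
      show m ∈ (Finset.Icc 1 m).filter (fun j => j % 2 = m % 2)
      rw [Finset.mem_filter, Finset.mem_Icc]
      omega
    obtain ⟨js, hjs, hjmax⟩ := Finset.exists_max_image (F m) (cf m) ⟨m, hmem⟩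
    set c : ℝ := (cf m js : ℝ) with hc
    have hmR : (1:ℝ) ≤ (m:ℝ) := by exact_mod_cast hm
    have hsum_le : (2 * pell m : ℝ) ≤ (m:ℝ) * c := by
      rw [← hsumcf m]
      calc ∑ j ∈ F m, (cf m j : ℝ) ≤ (F m).card • c :=
            Finset.sum_le_card_nsmul _ _ _ (fun j hj => by
              rw [hc]; exact_mod_cast hjmax j hj)
      _ = ((F m).card : ℝ) * c := nsmul_eq_mul _ _
      _ ≤ (m:ℝ) * c := by
            apply mul_le_mul_of_nonneg_right _ (by positivity)
            have h1 : (F m).card ≤ m := by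
              calc (F m).card ≤ (Finset.Icc 1 m).card := Finset.card_filter_le _ _
              _ = m := by rw [Nat.card_Icc]; omega
            exact_mod_cast h1
    have hφm : (1:ℝ) < (1 + Real.sqrt 2)^m :=
      one_lt_pow₀ hφ1 (show m ≠ 0 by omega)
    have hpell_lb : (1 + Real.sqrt 2)^m - 1 ≤ 3 * pell m := pell_ge m
    have hcpos : 0 < c := by nlinarith [Nat.cast_nonneg (α := ℝ) (pell m), hsum_le, hpell_lb, hφm, hmR]
    -- independence setup
    set V : ℕ → Ω → ℝ := fun j => if j = js then r' j else fun ω => r' j ω * cf m j with hV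
    have hVeq : V = fun j => (if j = js then cl else fun x => cl x * (cf m j : ℝ)) ∘ r j := by
      funext j ω
      by_cases h : j = js <;> simp [hV, hr', h, Function.comp]
    have hVindep : iIndepFun V ℙ := by
      rw [hVeq]
      exact hindep.comp _ (fun j => by
        split_ifs
        · exact cl_meas
        · exact cl_meas.mul_const _)
    have hVmeas : ∀ j, Measurable (V j) := by
      intro j
      rw [hV]
      simp only []
      split_ifs
      · exact r'_meas j
      · exact (r'_meas j).mul_const _
    set X : Ω → ℝ := fun ω => ∑ j ∈ (F m).erase js, r' j ω * cf m j with hX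
    have hXeq : ∀ ω, X ω = (∑ j ∈ (F m).erase js, V j) ω := by
      intro ω
      rw [hX, Finset.sum_apply]
      refine Finset.sum_congr rfl fun j hj => ?_
      have hne : j ≠ js := Finset.ne_of_mem_erase hj
      rw [hV]
      simp [hne]
    have hXY : IndepFun X (r' js) ℙ := by
      have h1 : IndepFun (∑ j ∈ (F m).erase js, V j) (V js) ℙ :=
        hVindep.indepFun_finsetSum_of_notMem hVmeas (Finset.notMem_erase js (F m))
      have h2 : V js = r' js := by rw [hV]; simp
      have h3 : X = ∑ j ∈ (F m).erase js, V j := funext hXeq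
      rw [h3, ← h2]
      exact h1
    have hXmeas : Measurable X :=
      Finset.measurable_sum _ fun j _ => (r'_meas j).mul_const _
    have hanti := anticoncentration X (r' js) hXmeas (r'_meas js) hXY (hmapr' js) hcpos
    have hsplitnn : ∀ ω, nn 0 m ω = X ω + r' js ω * c := by
      intro ω
      rw [hnn0, hX, hc, ← Finset.sum_erase_add (F m) _ hjs]
    have hsub : {ω | c/2 ≤ |nn 0 m ω|} ⊆ A m := by
      intro ω hω
      rw [Set.mem_setOf_eq] at hω
      rw [hA, Set.mem_setOf_eq]
      nlinarith [abs_nonneg (nn 0 m ω)]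
    have hcompl : ℙ {ω | |nn 0 m ω| < c/2} ≤ 2⁻¹ := by
      have hset : {ω | |nn 0 m ω| < c/2} = {ω | |X ω + r' js ω * c| < c/2} := by
        ext ω
        rw [Set.mem_setOf_eq, Set.mem_setOf_eq, hsplitnn ω]
      rw [hset]
      exact hanti
    have hmeas2 : MeasurableSet {ω | |nn 0 m ω| < c/2} :=
      measurableSet_lt (hnnmeas 0 m).abs measurable_const
    calc (2⁻¹ : ℝ≥0∞) = 1 - 2⁻¹ := ENNReal.one_sub_inv_two.symm
    _ ≤ 1 - ℙ {ω | |nn 0 m ω| < c/2} := tsub_le_tsub_left hcompl 1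
    _ = ℙ ({ω | |nn 0 m ω| < c/2}ᶜ) := (prob_compl_eq_one_sub hmeas2).symm
    _ ≤ ℙ (A m) := by
          apply measure_mono
          refine subset_trans ?_ hsub
          intro ω hω
          rw [Set.mem_compl_iff, Set.mem_setOf_eq, not_lt] at hω
          exact hω

  have hFatou : 2⁻¹ ≤ ℙ (limsup A atTop) := by
    have hls : limsup A atTop = ⋂ n, ⋃ i, ⋃ (_ : i ≥ n), A i := by
      rw [limsup_eq_iInf_iSup_of_nat]
      simp only [Set.iInf_eq_iInter, Set.iSup_eq_iUnion]
    rw [hls]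
    have hDmeas : ∀ n : ℕ, NullMeasurableSet (⋃ i, ⋃ (_ : i ≥ n), A i) ℙ :=
      fun n => (MeasurableSet.iUnion fun i =>
        MeasurableSet.iUnion fun _ => hAmeas i).nullMeasurableSet
    have hdir : Directed (· ⊇ ·) (fun n : ℕ => ⋃ i, ⋃ (_ : i ≥ n), A i) := by
      have hanti : Antitone (fun n : ℕ => ⋃ i, ⋃ (_ : i ≥ n), A i) := by
        intro n n' hnn'
        exact Set.iUnion₂_subset fun i hi =>
          Set.subset_iUnion₂ (s := fun i (_ : i ≥ n) => A i) i (le_trans hnn' hi)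
      exact hanti.directed_ge
    rw [Directed.measure_iInter hDmeas hdir ⟨0, measure_ne_top ℙ _⟩]
    refine le_iInf fun n => ?_
    refine le_trans (hPA (n+1) (by omega)) (measure_mono ?_)
    exact Set.subset_iUnion₂ (s := fun i (_ : i ≥ n) => A i) (n+1) (Nat.le_succ n)
  set B : Set Ω :=
    {ω | 1 + Real.sqrt 2 ≤ limsup (fun m : ℕ => |nn 0 m ω| ^ ((m:ℝ)⁻¹)) atTop} with hB
  have hAB : limsup A atTop ⊆ B := by
    intro ω hω
    rw [mem_limsup_iff_frequently_mem] at hω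
    rw [hB, Set.mem_setOf_eq]
    apply le_limsup_aux (fun m _ => hnn_le 0 m ω)
    intro c hc hcφ
    have hev := ev_lin hc hcφ
    refine ((hω.and_eventually (hev.and (eventually_ge_atTop 1))).mono ?_)
    rintro m ⟨hmA, hmev, hm1⟩
    rw [hA, Set.mem_setOf_eq] at hmA
    have hmR : (1:ℝ) ≤ (m:ℝ) := by exact_mod_cast hm1
    have h4m : (0:ℝ) < 4*(m:ℝ) := by linarith
    have hkey : 4*(m:ℝ)*c^m ≤ 4*(m:ℝ)*|nn 0 m ω| := by linarith
    exact (mul_le_mul_iff_right₀ h4m).mp hkey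
  set Ms : ℕ → MeasurableSpace Ω :=
    fun j => MeasurableSpace.comap (r j) inferInstance with hMs
  have hMsle : ∀ j, Ms j ≤ (inferInstance : MeasurableSpace Ω) := fun j => (hmeas j).comap_le
  have htail : MeasurableSet[limsup Ms atTop] B := by
    rw [limsup_eq_iInf_iSup_of_nat]
    rw [MeasurableSpace.measurableSet_iInf]
    intro n
    -- measurability of truncated sums w.r.t. the σ-algebra generated by r_j, j ≥ n
    have hnnMn : ∀ m, Measurable[⨆ j, ⨆ (_ : j ≥ n), Ms j] (nn n m) := by
      intro m
      refine Finset.measurable_sum _ fun j hj => ?_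
      rw [Finset.mem_filter] at hj
      have hjn : n ≤ j := hj.2
      have h1 : Measurable[⨆ j, ⨆ (_ : j ≥ n), Ms j] (r j) := by
        rw [measurable_iff_comap_le]
        exact le_trans (le_of_eq rfl) (le_iSup₂ (f := fun j (_ : j ≥ n) => Ms j) j hjn)
      exact (cl_meas.comp h1).mul_const _
    set ck : ℕ → ℝ := fun k => 2 + (Real.sqrt 2 - 1) * (((k:ℝ)+1)/((k:ℝ)+2)) with hck
    have hs21 : (0:ℝ) < Real.sqrt 2 - 1 := by nlinarith [s2gt1]
    have hck2 : ∀ k, 2 < ck k := by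
      intro k
      rw [hck]
      have h1 : (0:ℝ) < ((k:ℝ)+1)/((k:ℝ)+2) := by positivity
      nlinarith
    have hckφ : ∀ k, ck k < 1 + Real.sqrt 2 := by
      intro k
      rw [hck]
      have h1 : ((k:ℝ)+1)/((k:ℝ)+2) < 1 := by
        rw [div_lt_one (by positivity)]
        linarith
      nlinarith
    have hKpos : (0:ℝ) ≤ (n:ℝ) * 2^(2*n+1) := by positivity
    have hBC : B = ⋂ k : ℕ, ⋂ N : ℕ, ⋃ m : ℕ, ⋃ (_ : N ≤ m),
        {ω | (ck k)^m ≤ |nn n m ω|} := by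
      ext ω
      simp only [hB, Set.mem_setOf_eq, Set.mem_iInter, Set.mem_iUnion, exists_prop]
      constructor
      · intro hωB k N
        have h0 : ∀ c : ℝ, 2 < c → c < 1 + Real.sqrt 2 →
            ∃ᶠ m : ℕ in atTop, c^m ≤ |nn 0 m ω| :=
          fun c hc hcφ' => freq_of_le_limsup hωB c (by linarith) hcφ'
        have hn' : ∃ᶠ m : ℕ in atTop, (ck k)^m ≤ |nn n m ω| :=
          limsup_transfer hKpos (fun m => hdiff n m ω) h0 (ck k) (hck2 k) (hckφ k)
        exact frequently_atTop.mp hn' N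
      · intro hωC
        apply le_limsup_aux (fun m _ => hnn_le 0 m ω)
        have hn' : ∀ c : ℝ, 2 < c → c < 1 + Real.sqrt 2 →
            ∃ᶠ m : ℕ in atTop, c^m ≤ |nn n m ω| := by
          intro c hc hcφ'
          obtain ⟨k, hk⟩ : ∃ k : ℕ, c ≤ ck k := by
            set t := (c - 2)/(Real.sqrt 2 - 1) with ht
            have htpos : 0 < t := div_pos (by linarith) hs21
            have ht1 : t < 1 := (div_lt_one hs21).mpr (by linarith)
            obtain ⟨k, hk⟩ := exists_nat_gt (1/(1 - t))
            refine ⟨k, ?_⟩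
            have h1 : (0:ℝ) < 1 - t := by linarith
            have h2 : 1 < (k:ℝ)*(1-t) := by
              rw [div_lt_iff₀ h1] at hk
              nlinarith
            have h3 : t ≤ ((k:ℝ)+1)/((k:ℝ)+2) := by
              rw [le_div_iff₀ (by positivity)]
              nlinarith
            have h4 : c = 2 + (Real.sqrt 2 - 1) * t := by
              rw [ht]
              field_simp
              ring
            rw [h4, hck]
            have := mul_le_mul_of_nonneg_left h3 hs21.le
            linarith
          have hfreqk : ∃ᶠ m : ℕ in atTop, (ck k)^m ≤ |nn n m ω| :=
            frequently_atTop.mpr (fun N => hωC k N)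
          refine hfreqk.mono fun m hm => le_trans ?_ hm
          exact pow_le_pow_left₀ (by linarith) hk m
        have hback : ∀ c : ℝ, 2 < c → c < 1 + Real.sqrt 2 →
            ∃ᶠ m : ℕ in atTop, c^m ≤ |nn 0 m ω| := by
          refine limsup_transfer hKpos (fun m => ?_) hn'
          rw [abs_sub_comm]
          exact hdiff n m ω
        exact hback
    rw [hBC]
    refine MeasurableSet.iInter fun k => MeasurableSet.iInter fun N =>
      MeasurableSet.iUnion fun m => MeasurableSet.iUnion fun _ => ?_
    exact hnnMn m (measurableSet_le measurable_const measurable_abs)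
  have hB01 := measure_zero_or_one_of_measurableSet_limsup_atTop hMsle hindep.iIndep htail
  have hBmeas : MeasurableSet B := by
    have hle : limsup Ms atTop ≤ (inferInstance : MeasurableSpace Ω) :=
      limsup_le_of_le (by isBoundedDefault) (Eventually.of_forall hMsle)
    exact hle _ htail
  have hPB : ℙ B = 1 := by
    rcases hB01 with h0 | h1
    · exfalso
      have hge : 2⁻¹ ≤ ℙ B := le_trans hFatou (measure_mono hAB)
      rw [h0] at hge
      simp at hge
    · exact h1
  have hBae : ∀ᵐ ω ∂ℙ, ω ∈ B := by
    rw [ae_iff]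
    have hcompl : ℙ Bᶜ = 0 := by
      rw [prob_compl_eq_one_sub hBmeas, hPB]
      simp
    convert hcompl using 2
    rfl
  have hIccall : ∀ᵐ ω ∂ℙ, ∀ j, r j ω ∈ Set.Icc (-1:ℝ) 1 := ae_all_iff.mpr hIccae
  filter_upwards [hBae, hIccall] with ω hωB hωI
  have htarg : (fun m : ℕ =>
      |∑ j ∈ (Finset.Icc 1 m).filter (fun j => j % 2 = m % 2),
          r j ω * 2 ^ j * (((m + j) / 2 - 1).choose ((m - j) / 2) : ℝ)| ^ ((m : ℝ)⁻¹))
      = fun m : ℕ => |nn 0 m ω| ^ ((m:ℝ)⁻¹) := by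
    funext m
    congr 2
    rw [hnn0]
    refine Finset.sum_congr rfl fun j hj => ?_
    have h1 : r' j ω = r j ω := cl_eq _ (hωI j).1 (hωI j).2
    rw [h1, hcf]
    push_cast
    ring
  rw [htarg]
  exact le_antisymm (limsup_le_aux (fun m _ => hnn_le 0 m ω)) hωB
end
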